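/- arXiv:1406.6920 — 10 statements merged into one kernel-verified Lean document; each statement's English description precedes it below -/
import Mathlib

section
/- Let w and N be positive integers such that w ≥ 3 and w+1 ≤ N ≤ 2w+1. If there exists an SHF(N; n, 2, {1,w}), then n ≤ N. -/
/-- `A` is the representation matrix of an `SHF(N; n, 2, {1,w})`:
an `N × n` matrix with entries in `{0,1}` (here `Bool`) such that for every
column `c` and every `w`-element set `C` of columns with `c ∉ C`, there is a
row `r` with `A r c ≠ A r x` for every `x ∈ C`. -/
def IsSHF (N n w : ℕ) (A : Fin N → Fin n → Bool) : Prop :=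
  ∀ (c : Fin n) (C : Finset (Fin n)), C.card = w → c ∉ C →
    ∃ r : Fin N, ∀ x ∈ C, A r c ≠ A r x

/-- The type of row `r` of `A`: the number of entries of `r` equal to 1 (`true`). -/
def rowType {N n : ℕ} (A : Fin N → Fin n → Bool) (r : Fin N) : ℕ :=
  (Finset.univ.filter fun c => A r c = true).card

/-- `A` is in standard form: every row has at most `n/2` entries equal to 1. -/
def StandardForm {N n : ℕ} (A : Fin N → Fin n → Bool) : Prop :=
  ∀ r : Fin N, 2 * rowType A r ≤ n

/-- `A` is a permutation matrix of degree `N`: exactly one entry equal to 1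
in each row and in each column. -/
def IsPermMatrix {N : ℕ} (A : Fin N → Fin N → Bool) : Prop :=
  (∀ r : Fin N, ∃! c : Fin N, A r c = true) ∧
  (∀ c : Fin N, ∃! r : Fin N, A r c = true)

/-- Row `r` separates the column pair `({c}, C)`. -/
def Separates {N n : ℕ} (A : Fin N → Fin n → Bool) (r : Fin N)
    (c : Fin n) (C : Finset (Fin n)) : Prop :=
  ∀ x ∈ C, A r c ≠ A r x

/-- The number of column pairs `({c}, C)` with `|C| = w` and `c ∉ C`
that are separated by row `r`. -/
def sepCount {N n : ℕ} (A : Fin N → Fin n → Bool) (w : ℕ) (r : Fin N) : ℕ :=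
  (Finset.univ.filter fun p : Fin n × Finset (Fin n) =>
    p.2.card = w ∧ p.1 ∉ p.2 ∧ ∀ x ∈ p.2, A r p.1 ≠ A r x).card

/-- The number of column pairs `({c}, C)` with `|C| = w` and `c ∉ C`
that are separated by both rows `r₁` and `r₂`. -/
def sepCount2 {N n : ℕ} (A : Fin N → Fin n → Bool) (w : ℕ) (r₁ r₂ : Fin N) : ℕ :=
  (Finset.univ.filter fun p : Fin n × Finset (Fin n) =>
    p.2.card = w ∧ p.1 ∉ p.2 ∧
      (∀ x ∈ p.2, A r₁ p.1 ≠ A r₁ x) ∧ (∀ x ∈ p.2, A r₂ p.1 ≠ A r₂ x)).card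

/-- The overlap of rows `r₁` and `r₂`: the number of columns in which
both rows have entry 1. -/
def overlap {N n : ℕ} (A : Fin N → Fin n → Bool) (r₁ r₂ : Fin N) : ℕ :=
  (Finset.univ.filter fun c => A r₁ c = true ∧ A r₂ c = true).card

theorem stmt0 (w N n : ℕ) (hw : 3 ≤ w) (hN1 : w + 1 ≤ N) (hN2 : N ≤ 2 * w + 1)
    (hn : 1 ≤ n) (A : Fin N → Fin n → Bool) (hA : IsSHF N n w A) :
    n ≤ N := by
  by_contra hcon
  push_neg at hcon
  classical
  have bool3 : ∀ a b c : Bool, a ≠ b → a ≠ c → b = c := by decide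
  -- Step 2 : there is a column not uniquely identified by any row
  have step2 : ∃ c : Fin n, ∀ r : Fin N, ∃ x, x ≠ c ∧ A r x = A r c := by
    by_contra hno
    push_neg at hno
    choose f hf using hno
    obtain ⟨c, c', hne, hfe⟩ := Fintype.exists_ne_map_eq_of_card_lt f (by simpa using hcon)
    have hcard2 : ({c, c'} : Finset (Fin n)).card ≤ 2 :=
      (Finset.card_insert_le _ _).trans (by simp)
    have hne' : ((Finset.univ : Finset (Fin n)) \ {c, c'}).Nonempty := by
      rw [← Finset.card_pos, Finset.card_sdiff_of_subset (Finset.subset_univ _), Finset.card_univ,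
        Fintype.card_fin]
      omega
    obtain ⟨x, hxmem⟩ := hne'
    have hx : x ≠ c ∧ x ≠ c' := by
      have := (Finset.mem_sdiff.mp hxmem).2
      simpa only [Finset.mem_insert, Finset.mem_singleton, not_or] using this
    have e1 : A (f c) x ≠ A (f c) c := hf c x hx.1
    have e2 : A (f c) x ≠ A (f c) c' := hfe ▸ hf c' x hx.2
    have e3 : A (f c) c' ≠ A (f c) c := hf c c' hne.symm
    exact e3 (bool3 _ _ _ e2 e1)
  obtain ⟨c, hc⟩ := step2
  have hcE : c ∉ Finset.univ.erase c := Finset.notMem_erase c _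
  have hEcard : (Finset.univ.erase c).card = n - 1 := by
    rw [Finset.card_erase_of_mem (Finset.mem_univ c)]; simp
  -- the "has common disagreeing row" predicate
  set P : Finset (Fin n) → Prop := fun X => ∃ r, ∀ x ∈ X, A r x ≠ A r c with hP
  have hPE : ¬ P (Finset.univ.erase c) := by
    rintro ⟨r, hr⟩
    obtain ⟨x, hxc, hxe⟩ := hc r
    exact hr x (Finset.mem_erase.mpr ⟨hxc, Finset.mem_univ x⟩) hxe
  -- minimal bad set X
  set T : Finset (Finset (Fin n)) :=
    (Finset.univ.erase c).powerset.filter (fun X => ¬ P X) with hT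
  have hTne : T.Nonempty := ⟨Finset.univ.erase c, by
    simp only [hT, Finset.mem_filter, Finset.mem_powerset]
    exact ⟨Finset.Subset.refl _, hPE⟩⟩
  obtain ⟨X, hXT, hXmin⟩ := T.exists_min_image Finset.card hTne
  have hXE : X ⊆ Finset.univ.erase c := Finset.mem_powerset.mp (Finset.mem_filter.mp hXT).1
  have hXP : ¬ P X := (Finset.mem_filter.mp hXT).2
  have hcX : c ∉ X := fun h => (Finset.mem_erase.mp (hXE h)).1 rfl
  -- k ≥ w + 1
  have hk : w + 1 ≤ X.card := by
    by_contra hkle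
    push_neg at hkle
    obtain ⟨X', hXX', hX'E, hX'card⟩ :=
      Finset.exists_subsuperset_card_eq (n := w) hXE (by omega) (by rw [hEcard]; omega)
    obtain ⟨r, hr⟩ := hA c X' hX'card (fun h => (Finset.mem_erase.mp (hX'E h)).1 rfl)
    exact hXP ⟨r, fun x hx => (hr x (hXX' hx)).symm⟩
  -- minimality gives the inside rows p x
  have hmin : ∀ x ∈ X, P (X.erase x) := by
    intro x hx
    by_contra hnp
    have hmem : X.erase x ∈ T := Finset.mem_filter.mpr
      ⟨Finset.mem_powerset.mpr ((Finset.erase_subset _ _).trans hXE), hnp⟩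
    have h1 := hXmin _ hmem
    have h2 : (X.erase x).card < X.card := Finset.card_erase_lt_of_mem hx
    omega
  have hPfun : ∀ x : Fin n, ∃ r : Fin N,
      x ∈ X → (A r x = A r c ∧ ∀ y ∈ X, y ≠ x → A r y ≠ A r c) := by
    intro x
    by_cases hx : x ∈ X
    · obtain ⟨r, hr⟩ := hmin x hx
      refine ⟨r, fun _ => ⟨?_, fun y hy hyx => hr y (Finset.mem_erase.mpr ⟨hyx, hy⟩)⟩⟩
      by_contra hne
      refine hXP ⟨r, fun y hy => ?_⟩
      by_cases hyx : y = x
      · subst hyx; exact hne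
      · exact hr y (Finset.mem_erase.mpr ⟨hyx, hy⟩)
    · exact ⟨⟨0, by omega⟩, fun h => absurd h hx⟩
  choose p hp using hPfun
  have hp1 : ∀ x ∈ X, A (p x) x = A (p x) c := fun x hx => (hp x hx).1
  have hp2 : ∀ x ∈ X, ∀ y ∈ X, y ≠ x → A (p x) y ≠ A (p x) c := fun x hx => (hp x hx).2
  have hpinj : Set.InjOn p X := by
    intro a ha b hb hab
    by_contra hne
    exact hp2 b hb a ha hne (by rw [← hab]; exact hp1 a ha)
  have himg : (X.image p).card = X.card := Finset.card_image_of_injOn hpinj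
  have houtcard : (Finset.univ \ X.image p).card = N - X.card := by
    rw [Finset.card_sdiff_of_subset (Finset.subset_univ _), himg]; simp
  -- Lemma L : separators exist and are outside rows
  have hL : ∀ i ∈ X, ∀ S ⊆ X.erase i, S.card = w - 1 →
      ∃ r, r ∉ X.image p ∧ A r i ≠ A r c ∧ ∀ s ∈ S, A r s = A r c := by
    intro i hi S hS hScard
    have hSX : S ⊆ X := hS.trans (Finset.erase_subset _ _)
    have hcS : c ∉ S := fun h => hcX (hSX h)
    have hiS : i ∉ S := fun h => (Finset.mem_erase.mp (hS h)).1 rfl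
    have hiC : i ∉ insert c S := by
      simp only [Finset.mem_insert, not_or]
      exact ⟨(Finset.mem_erase.mp (hXE hi)).1, hiS⟩
    have hCcard : (insert c S).card = w := by
      rw [Finset.card_insert_of_notMem hcS, hScard]; omega
    obtain ⟨r, hr⟩ := hA i (insert c S) hCcard hiC
    have hric : A r i ≠ A r c := hr c (Finset.mem_insert_self _ _)
    have hrs : ∀ s ∈ S, A r s = A r c := fun s hs =>
      bool3 (A r i) (A r s) (A r c) (hr s (Finset.mem_insert_of_mem hs)) hric
    refine ⟨r, ?_, hric, hrs⟩
    intro hmem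
    obtain ⟨j, hj, hje⟩ := Finset.mem_image.mp hmem
    by_cases hji : j = i
    · subst hji
      exact hric (by rw [← hje]; exact hp1 j hj)
    · have h2 : 1 < S.card := by omega
      obtain ⟨s, hs, hsj⟩ := Finset.exists_mem_ne h2 j
      have hne : A r s ≠ A r c := by
        rw [← hje]; exact hp2 j hj s (hSX hs) hsj
      exact hne (hrs s hs)
  -- Claim B
  have claimB : ∀ i ∈ X,
      (∃ r, r ∉ X.image p ∧ A r i ≠ A r c ∧ ∀ y ∈ X, y ≠ i → A r y = A r c) ∨
      (∀ r, r ∉ X.image p → A r i ≠ A r c) := by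
    intro i hi
    by_contra hB
    push_neg at hB
    obtain ⟨h1, r0, hr0out, hr0eq⟩ := hB
    set F : Finset (Fin N) :=
      (Finset.univ \ X.image p).filter (fun r => A r i ≠ A r c) with hF
    have hr0F : r0 ∉ F := by
      simp only [hF, Finset.mem_filter, not_and]
      intro _ h
      exact h hr0eq
    have hFsub : F ⊆ (Finset.univ \ X.image p).erase r0 := by
      intro r hr
      refine Finset.mem_erase.mpr ⟨fun h => hr0F (h ▸ hr), (Finset.mem_filter.mp hr).1⟩
    have hr0mem : r0 ∈ Finset.univ \ X.image p :=
      Finset.mem_sdiff.mpr ⟨Finset.mem_univ r0, hr0out⟩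
    have hFcard : F.card ≤ N - X.card - 1 := by
      have := Finset.card_le_card hFsub
      rw [Finset.card_erase_of_mem hr0mem, houtcard] at this
      omega
    have hq : ∀ r : Fin N, ∃ y : Fin n, r ∈ F → (y ∈ X.erase i ∧ A r y ≠ A r c) := by
      intro r
      by_cases hr : r ∈ F
      · have hrout : r ∉ X.image p := (Finset.mem_sdiff.mp (Finset.mem_filter.mp hr).1).2
        have hrne : A r i ≠ A r c := (Finset.mem_filter.mp hr).2
        obtain ⟨y, hy, hyi, hyne⟩ := h1 r hrout hrne
        exact ⟨y, fun _ => ⟨Finset.mem_erase.mpr ⟨hyi, hy⟩, hyne⟩⟩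
      · exact ⟨i, fun h => absurd h hr⟩
    choose q hqq using hq
    have hS0sub : F.image q ⊆ X.erase i := by
      intro y hy
      obtain ⟨r, hr, hre⟩ := Finset.mem_image.mp hy
      exact hre ▸ (hqq r hr).1
    have hS0card : (F.image q).card ≤ w - 1 := by
      have h1' := Finset.card_image_le (f := q) (s := F)
      omega
    obtain ⟨S, hS0S, hSsub, hScard⟩ := Finset.exists_subsuperset_card_eq hS0sub hS0card
      (by rw [Finset.card_erase_of_mem hi]; omega)
    obtain ⟨r, hrout, hri, hrs⟩ := hL i hi S hSsub hScard
    have hrF : r ∈ F := Finset.mem_filter.mpr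
      ⟨Finset.mem_sdiff.mpr ⟨Finset.mem_univ r, hrout⟩, hri⟩
    have hqr : A r (q r) ≠ A r c := (hqq r hrF).2
    exact hqr (hrs (q r) (hS0S (Finset.mem_image_of_mem q hrF)))
  -- Final case analysis
  by_cases hall : ∀ i ∈ X, ∃ r, r ∉ X.image p ∧ A r i ≠ A r c ∧
      ∀ y ∈ X, y ≠ i → A r y = A r c
  · have hρ : ∀ i : Fin n, ∃ r : Fin N, i ∈ X →
        (r ∉ X.image p ∧ A r i ≠ A r c ∧ ∀ y ∈ X, y ≠ i → A r y = A r c) := by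
      intro i
      by_cases hi : i ∈ X
      · obtain ⟨r, hr⟩ := hall i hi
        exact ⟨r, fun _ => hr⟩
      · exact ⟨⟨0, by omega⟩, fun h => absurd h hi⟩
    choose ρ hρp using hρ
    have hinj : Set.InjOn ρ X := by
      intro a ha b hb hab
      by_contra hne
      have h1 := (hρp a ha).2.1
      have h2 := (hρp b hb).2.2 a ha hne
      rw [hab] at h1
      exact h1 h2
    have h1 : (X.image ρ).card = X.card := Finset.card_image_of_injOn hinj
    have hsub : X.image ρ ⊆ Finset.univ \ X.image p := by
      intro r hr
      obtain ⟨i, hi, hie⟩ := Finset.mem_image.mp hr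
      simp only [Finset.mem_sdiff, Finset.mem_univ, true_and]
      exact hie ▸ (hρp i hi).1
    have h2 := Finset.card_le_card hsub
    rw [h1, houtcard] at h2
    omega
  · push_neg at hall
    obtain ⟨i0, hi0, hni0⟩ := hall
    have hstar : ∀ r, r ∉ X.image p → A r i0 ≠ A r c := by
      rcases claimB i0 hi0 with ⟨r, h1, h2, h3⟩ | h
      · obtain ⟨y, hy, hyne, hcontra⟩ := hni0 r h1 h2
        exact absurd (h3 y hy hyne) hcontra
      · exact h
    have hstar2 : ∀ i ∈ X, ∀ r, r ∉ X.image p → A r i ≠ A r c := by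
      intro i hi
      by_cases hii : i = i0
      · subst hii; exact hstar
      · rcases claimB i hi with ⟨r, hrout, hri, hrall⟩ | h
        · exact absurd (hrall i0 hi0 (fun h => hii h.symm)) (hstar r hrout)
        · exact h
    obtain ⟨S, hSsub, hScard⟩ := Finset.exists_subset_card_eq
      (s := X.erase i0) (n := w - 1) (by rw [Finset.card_erase_of_mem hi0]; omega)
    obtain ⟨r, hrout, hri, hrs⟩ := hL i0 hi0 S hSsub hScard
    have hSne : S.Nonempty := Finset.card_pos.mp (by omega)
    obtain ⟨s, hs⟩ := hSne
    exact hstar2 s ((hSsub.trans (Finset.erase_subset _ _)) hs) r hrout (hrs s hs)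
end

section
/- Let w and N be positive integers such that w ≥ 3 and w+1 ≤ N ≤ 2w+1. Then every SHF(N; N, 2, {1,w}) in standard form is a permutation matrix of degree N. -/
lemma card_filter_subset {n w : ℕ} (S : Finset (Fin n)) :
    (Finset.univ.filter fun C : Finset (Fin n) => C.card = w ∧ C ⊆ S).card
      = S.card.choose w := by
  rw [← Finset.card_powersetCard]
  congr 1
  ext C
  simp [Finset.mem_powersetCard, and_comm]

lemma choose_le_choose_pred {n' w : ℕ} (hw : 1 ≤ w) (h : n' + 1 ≤ 2 * w) :
    n'.choose w ≤ n'.choose (w - 1) := by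
  have hkey : n'.choose w * w = n'.choose (w-1) * (n' - (w-1)) := by
    have := Nat.choose_succ_right_eq n' (w-1)
    have hw1 : w - 1 + 1 = w := by omega
    rw [hw1] at this
    exact this
  have h2 : n'.choose (w-1) * (n' - (w-1)) ≤ n'.choose (w-1) * w :=
    Nat.mul_le_mul_left _ (by omega)
  have h3 : n'.choose w * w ≤ n'.choose (w-1) * w := hkey.le.trans h2
  exact Nat.le_of_mul_le_mul_right h3 (by omega)

lemma pascal' {n' w : ℕ} (hw : 1 ≤ w) :
    (n' + 1).choose w = n'.choose (w-1) + n'.choose w := by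
  have hw1 : w = (w - 1) + 1 := by omega
  rw [hw1]
  rw [Nat.choose_succ_succ]
  simp

lemma step_le {N w s : ℕ} (hs : 1 ≤ s) (hw : 1 ≤ w) (h : N ≤ 2 * w + s) :
    (s+1) * (N - s - 1).choose w ≤ s * (N - s).choose w := by
  rcases Nat.lt_or_ge N (s+1) with h' | h'
  · have e1 : N - s = 0 := by omega
    have e2 : N - s - 1 = 0 := by omega
    rw [e2, e1, Nat.choose_eq_zero_of_lt hw]
    simp
  · set n' := N - s - 1 with hn'
    have hN : N - s = n' + 1 := by omega
    have hle : n'.choose w ≤ n'.choose (w-1) := choose_le_choose_pred hw (by omega)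
    rw [hN, pascal' hw]
    have h4 : n'.choose w ≤ s * n'.choose (w-1) :=
      hle.trans (Nat.le_mul_of_pos_left _ hs)
    calc (s+1) * n'.choose w = s * n'.choose w + n'.choose w := by ring
      _ ≤ s * n'.choose w + s * n'.choose (w-1) := by omega
      _ = s * (n'.choose (w-1) + n'.choose w) := by ring

lemma chain_le {N w a : ℕ} (hw : 1 ≤ w) (ha : 1 ≤ a) (hN : N ≤ 2*w+a) :
    ∀ t, a ≤ t → t * (N - t).choose w ≤ a * (N - a).choose w := by
  intro t ht
  induction t with
  | zero => omega
  | succ t ih =>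
    rcases Nat.lt_or_ge t a with h' | h'
    · have hat : a = t + 1 := by omega
      rw [← hat]
    · have h1 : (t+1) * (N - t - 1).choose w ≤ t * (N - t).choose w :=
        step_le (by omega) hw (by omega)
      have h2 := ih h'
      have e : N - (t+1) = N - t - 1 := by omega
      rw [e]
      exact h1.trans h2

-- strict: C(n',w) < C(n',w-1) when n' ≥ w and n'+1-w < w  (i.e. n' ≤ 2w-2)
lemma choose_lt_choose_pred {n' w : ℕ} (hw : 1 ≤ w) (hn : w ≤ n') (h : n' + 1 < 2 * w) :
    n'.choose w < n'.choose (w - 1) := by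
  have hkey : n'.choose w * w = n'.choose (w-1) * (n' - (w-1)) := by
    have := Nat.choose_succ_right_eq n' (w-1)
    have hw1 : w - 1 + 1 = w := by omega
    rw [hw1] at this
    exact this
  have hpos : 0 < n'.choose (w-1) := Nat.choose_pos (by omega)
  have h2 : n'.choose (w-1) * (n' - (w-1)) < n'.choose (w-1) * w :=
    (Nat.mul_lt_mul_left hpos).mpr (show n' - (w-1) < w by omega)
  have h3 : n'.choose w * w < n'.choose (w-1) * w := by omega
  exact Nat.lt_of_mul_lt_mul_right h3

-- S1 : 2*C(N-2,w) < C(N-1,w), when w+2 ≤ N ≤ 2w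
lemma S1 {N w : ℕ} (hw : 1 ≤ w) (h1 : w + 2 ≤ N) (h2 : N ≤ 2*w) :
    2 * (N-2).choose w < (N-1).choose w := by
  have hN : N - 1 = (N - 2) + 1 := by omega
  have hw1 : w = (w - 1) + 1 := by omega
  have hpascal : (N-1).choose w = (N-2).choose (w-1) + (N-2).choose w := by
    rw [hN, hw1, Nat.choose_succ_succ]
    simp
  have hlt : (N-2).choose w < (N-2).choose (w-1) :=
    choose_lt_choose_pred hw (by omega) (by omega)
  omega

lemma S2 {N w : ℕ} (hw : 1 ≤ w) (h1 : w + 2 ≤ N) (h2 : N ≤ 2*w + 2) :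
    3 * (N-3).choose w < 2 * (N-2).choose w := by
  have hN : N - 2 = (N - 3) + 1 := by omega
  have hw1 : w = (w - 1) + 1 := by omega
  have hpascal : (N-2).choose w = (N-3).choose (w-1) + (N-3).choose w := by
    rw [hN, hw1, Nat.choose_succ_succ]
    simp
  have hle : (N-3).choose w ≤ (N-3).choose (w-1) := by
    have hkey : (N-3).choose w * w = (N-3).choose (w-1) * ((N-3) - (w-1)) := by
      have := Nat.choose_succ_right_eq (N-3) (w-1)
      have hw2 : w - 1 + 1 = w := by omega
      rw [hw2] at this; exact this
    have h2' : (N-3).choose (w-1) * ((N-3) - (w-1)) ≤ (N-3).choose (w-1) * w :=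
      Nat.mul_le_mul_left _ (by omega)
    exact Nat.le_of_mul_le_mul_right (hkey.le.trans h2') (by omega)
  have hpos : 0 < (N-3).choose (w-1) := Nat.choose_pos (by omega)
  omega

-- central binomial lemma : (w+1)^2 < C(2w,w) for w ≥ 3
lemma cb_gt {w : ℕ} (hw : 3 ≤ w) : (w+1)*(w+1) < (2*w).choose w := by
  induction w with
  | zero => omega
  | succ w ih =>
    rcases Nat.lt_or_ge w 3 with h' | h'
    · have hw2 : w = 2 := by omega
      subst hw2
      decide
    · have ihw := ih h'
      have key : (w + 1) * Nat.centralBinom (w + 1) = 2 * (2 * w + 1) * Nat.centralBinom w :=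
        Nat.succ_mul_centralBinom_succ w
      have e1 : Nat.centralBinom w = (2*w).choose w := rfl
      have e2 : Nat.centralBinom (w+1) = (2*(w+1)).choose (w+1) := by
        unfold Nat.centralBinom; ring_nf
      rw [e1, e2] at key
      have : (w+1) * ((w+2)*(w+2)) < (w+1) * ((2*(w+1)).choose (w+1)) := by
        rw [key]
        nlinarith [ihw]
      have := Nat.lt_of_mul_lt_mul_left this
      simpa using this

lemma half_cb {w : ℕ} (hw : 1 ≤ w) : 2 * (2*w - 1).choose w = (2*w).choose w := by
  have hN : 2*w = (2*w - 1) + 1 := by omega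
  have hw1 : w = (w - 1) + 1 := by omega
  have hpascal : (2*w).choose w = (2*w-1).choose (w-1) + (2*w-1).choose w := by
    rw [hN, hw1, Nat.choose_succ_succ]
    simp
  have hsymm : (2*w-1).choose (w-1) = (2*w-1).choose w := by
    have := Nat.choose_symm (show w ≤ 2*w-1 by omega)
    have e : 2*w-1-w = w-1 := by omega
    rw [e] at this
    exact this
  omega

lemma KB {N w t : ℕ} (hw : 3 ≤ w) (hN1 : w + 1 ≤ N) (hN2 : N ≤ 2*w+1) (ht : 2*t ≤ N) :
    t * (N-t).choose w + (N-t) * t.choose w ≤ (N-1).choose w ∧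
    (t * (N-t).choose w + (N-t) * t.choose w = (N-1).choose w →
       t = 1 ∨ (t = 2 ∧ N = 2*w+1)) := by
  have hcpos : 0 < (N-1).choose w := Nat.choose_pos (by omega)
  have htw : t ≤ w := by omega
  rcases Nat.lt_or_ge t w with htlt | htge
  · -- t < w : second term vanishes
    have hz : t.choose w = 0 := Nat.choose_eq_zero_of_lt htlt
    rw [hz, Nat.mul_zero, Nat.add_zero]
    rcases Nat.eq_zero_or_pos t with ht0 | ht1
    · subst ht0; simp; omega
    rcases Nat.lt_or_ge t 2 with ht1' | ht2
    · have : t = 1 := by omega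
      subst this
      constructor
      · simp
      · intro _; left; rfl
    · -- 2 ≤ t < w
      have hstrict : t * (N-t).choose w < (N-1).choose w ∨ (t = 2 ∧ N = 2*w+1) := by
        rcases Nat.lt_or_ge N (w+2) with hNs | hNb
        · -- N = w+1 : C(N-t, w) = 0
          left
          have : (N-t).choose w = 0 := Nat.choose_eq_zero_of_lt (by omega)
          rw [this]; simpa using hcpos
        · rcases Nat.lt_or_ge N (2*w+1) with hNle | hNeq
          · -- N ≤ 2w : strict via S1
            left
            have hc2 : t * (N-t).choose w ≤ 2 * (N-2).choose w :=
              chain_le (by omega) (by omega) (by omega) t ht2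
            exact hc2.trans_lt (S1 (by omega) (by omega) (by omega))
          · have hN' : N = 2*w+1 := by omega
            rcases Nat.lt_or_ge t 3 with ht2' | ht3
            · right; exact ⟨by omega, hN'⟩
            · left
              have hc3 : t * (N-t).choose w ≤ 3 * (N-3).choose w :=
                chain_le (by omega) (by omega) (by omega) t ht3
              have h32 := S2 (show 1 ≤ w by omega) (show w+2 ≤ N by omega) (by omega)
              have h21 : 2 * (N-2).choose w ≤ 1 * (N-1).choose w := by
                have := step_le (show (1:ℕ) ≤ 1 by omega) (show 1 ≤ w by omega)
                  (show N ≤ 2*w+1 by omega)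
                simpa [Nat.sub_sub] using this
              omega
      rcases hstrict with h | ⟨ht2e, hNe⟩
      · exact ⟨h.le, fun he => absurd he h.ne⟩
      · subst ht2e hNe
        have he : 2 * (2*w+1-2).choose w = (2*w+1-1).choose w := by
          have e1 : 2*w+1-2 = 2*w-1 := by omega
          have e2 : 2*w+1-1 = 2*w := by omega
          rw [e1, e2, half_cb (by omega)]
        exact ⟨he.le, fun _ => Or.inr ⟨rfl, rfl⟩⟩
  · -- t = w
    have htw' : t = w := by omega
    subst htw'
    have hcw : t.choose t = 1 := Nat.choose_self t
    rcases Nat.lt_or_ge N (2*t+1) with hNe | hNe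
    · -- N = 2w
      have hN' : N = 2*t := by omega
      subst hN'
      have e1 : 2*t - t = t := by omega
      rw [e1, hcw]
      have hcb := cb_gt hw
      have hhalf := half_cb (show 1 ≤ t by omega)
      have hlt : t * 1 + t * 1 < (2*t-1).choose t := by
        have : (t+1)*(t+1) < 2 * (2*t-1).choose t := by rw [hhalf]; exact hcb
        nlinarith
      exact ⟨by omega, by omega⟩
    · -- N = 2w+1
      have hN' : N = 2*t+1 := by omega
      subst hN'
      have e1 : 2*t+1 - t = t+1 := by omega
      have e2 : 2*t+1-1 = 2*t := by omega
      rw [e1, e2, hcw]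
      have hc1 : (t+1).choose t = t+1 := by
        have := Nat.choose_symm (show t ≤ t+1 by omega)
        have e : t+1-t = 1 := by omega
        rw [e, Nat.choose_one_right] at this
        exact this.symm
      rw [hc1]
      have hcb := cb_gt hw
      constructor
      · nlinarith
      · intro he; nlinarith

open Finset in
lemma card_filter_prod {n : ℕ} {α : Type*} [Fintype α] [DecidableEq α]
    (P : Fin n → α → Prop) [∀ p, DecidablePred (P p)] :
    (Finset.univ.filter fun p : Fin n × α => P p.1 p.2).card
      = ∑ c : Fin n, (Finset.univ.filter fun C => P c C).card := by
  rw [Finset.card_filter]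
  rw [Fintype.sum_prod_type]
  congr 1
  ext c
  rw [Finset.card_filter]

open Finset in
lemma sepCount_eq {N n w : ℕ} (A : Fin N → Fin n → Bool) (r : Fin N) :
    sepCount A w r = rowType A r * (n - rowType A r).choose w
      + (n - rowType A r) * (rowType A r).choose w := by
  classical
  set T : Finset (Fin n) := Finset.univ.filter (fun c => A r c = true) with hT
  have hTc : ∀ x, x ∈ Tᶜ ↔ A r x = false := by
    intro x
    simp [hT, Finset.mem_compl]
  have hTm : ∀ x, x ∈ T ↔ A r x = true := by
    intro x; simp [hT]
  have hcf := card_filter_prod (fun (c : Fin n) (C : Finset (Fin n)) =>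
    C.card = w ∧ c ∉ C ∧ ∀ x ∈ C, A r c ≠ A r x)
  beta_reduce at hcf
  rw [sepCount, hcf]
  have hsplit := Finset.sum_filter_add_sum_filter_not Finset.univ (fun c => A r c = true)
    (fun c => (Finset.univ.filter fun C : Finset (Fin n) =>
      C.card = w ∧ c ∉ C ∧ ∀ x ∈ C, A r c ≠ A r x).card)
  rw [← hsplit]
  have h1 : ∀ c ∈ Finset.univ.filter (fun c => A r c = true),
      (Finset.univ.filter fun C : Finset (Fin n) =>
        C.card = w ∧ c ∉ C ∧ ∀ x ∈ C, A r c ≠ A r x).card = (n - rowType A r).choose w := by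
    intro c hc
    have hct : A r c = true := (Finset.mem_filter.mp hc).2
    have : (Finset.univ.filter fun C : Finset (Fin n) =>
        C.card = w ∧ c ∉ C ∧ ∀ x ∈ C, A r c ≠ A r x)
        = (Finset.univ.filter fun C : Finset (Fin n) => C.card = w ∧ C ⊆ Tᶜ) := by
      apply Finset.filter_congr
      intro C _
      constructor
      · rintro ⟨h1, h2, h3⟩
        refine ⟨h1, fun x hx => ?_⟩
        rw [hTc]
        have := h3 x hx
        rw [hct] at this
        exact Bool.not_eq_true _ ▸ (by simpa using this.symm)
      · rintro ⟨h1, h2⟩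
        refine ⟨h1, ?_, ?_⟩
        · intro hcC
          have := (hTc c).mp (h2 hcC)
          rw [hct] at this; exact Bool.noConfusion this
        · intro x hx
          have := (hTc x).mp (h2 hx)
          rw [hct, this]; simp
    rw [this, card_filter_subset]
    congr 1
    rw [Finset.card_compl]
    simp [rowType, hT]
  have h2 : ∀ c ∈ Finset.univ.filter (fun c => ¬ A r c = true),
      (Finset.univ.filter fun C : Finset (Fin n) =>
        C.card = w ∧ c ∉ C ∧ ∀ x ∈ C, A r c ≠ A r x).card = (rowType A r).choose w := by
    intro c hc
    have hct : A r c = false := by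
      have := (Finset.mem_filter.mp hc).2
      simpa using this
    have : (Finset.univ.filter fun C : Finset (Fin n) =>
        C.card = w ∧ c ∉ C ∧ ∀ x ∈ C, A r c ≠ A r x)
        = (Finset.univ.filter fun C : Finset (Fin n) => C.card = w ∧ C ⊆ T) := by
      apply Finset.filter_congr
      intro C _
      constructor
      · rintro ⟨h1, h2, h3⟩
        refine ⟨h1, fun x hx => ?_⟩
        rw [hTm]
        have := h3 x hx
        rw [hct] at this
        simpa using this.symm
      · rintro ⟨h1, h2⟩
        refine ⟨h1, ?_, ?_⟩
        · intro hcC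
          have := (hTm c).mp (h2 hcC)
          rw [hct] at this; exact Bool.noConfusion this
        · intro x hx
          have := (hTm x).mp (h2 hx)
          rw [hct, this]; simp
    rw [this, card_filter_subset]
    congr 1
  rw [Finset.sum_congr rfl h1, Finset.sum_congr rfl h2]
  rw [Finset.sum_const, Finset.sum_const]
  have e1 : (Finset.univ.filter (fun c => A r c = true)).card = rowType A r := rfl
  have e2 : (Finset.univ.filter (fun c => ¬ A r c = true)).card = n - rowType A r := by
    rw [← Finset.compl_filter, Finset.card_compl]
    simp [rowType]
  rw [e1, e2, smul_eq_mul, smul_eq_mul]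

lemma card_pairs {n w : ℕ} :
    (Finset.univ.filter fun p : Fin n × Finset (Fin n) =>
      p.2.card = w ∧ p.1 ∉ p.2).card = n * (n-1).choose w := by
  classical
  have hcf := card_filter_prod (fun (c : Fin n) (C : Finset (Fin n)) =>
    C.card = w ∧ c ∉ C)
  beta_reduce at hcf
  rw [hcf]
  have h1 : ∀ c : Fin n, (Finset.univ.filter fun C : Finset (Fin n) =>
      C.card = w ∧ c ∉ C).card = (n-1).choose w := by
    intro c
    have : (Finset.univ.filter fun C : Finset (Fin n) => C.card = w ∧ c ∉ C)
        = (Finset.univ.filter fun C : Finset (Fin n) => C.card = w ∧ C ⊆ ({c}ᶜ : Finset (Fin n))) := by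
      apply Finset.filter_congr
      intro C _
      constructor
      · rintro ⟨hc1, hc2⟩
        refine ⟨hc1, fun x hx => ?_⟩
        simp only [Finset.mem_compl, Finset.mem_singleton]
        rintro rfl; exact hc2 hx
      · rintro ⟨hc1, hc2⟩
        refine ⟨hc1, fun hc => ?_⟩
        have := hc2 hc
        simp at this
    rw [this, card_filter_subset]
    congr 1
    rw [Finset.card_compl]
    simp
  rw [Finset.sum_congr rfl (fun c _ => h1 c), Finset.sum_const]
  simp [Finset.card_univ, mul_comm]

instance sepDec {N n : ℕ} (A : Fin N → Fin n → Bool) (r : Fin N) (c : Fin n)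
    (C : Finset (Fin n)) : Decidable (Separates A r c C) := by
  unfold Separates; infer_instance

open Finset in
lemma sum_sepCount {N n w : ℕ} (A : Fin N → Fin n → Bool) :
    ∑ r : Fin N, sepCount A w r
      = ∑ p ∈ (Finset.univ.filter fun p : Fin n × Finset (Fin n) =>
            p.2.card = w ∧ p.1 ∉ p.2),
          (Finset.univ.filter fun r : Fin N => Separates A r p.1 p.2).card := by
  classical
  unfold sepCount
  rw [Finset.sum_filter]
  simp only [Finset.card_filter]
  rw [Finset.sum_comm]
  apply Finset.sum_congr rfl
  intro p _
  by_cases hp : p.2.card = w ∧ p.1 ∉ p.2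
  · rw [if_pos hp]
    apply Finset.sum_congr rfl
    intro r _
    by_cases hs : Separates A r p.1 p.2
    · rw [if_pos hs, if_pos ⟨hp.1, hp.2, hs⟩]
    · rw [if_neg hs, if_neg (by rintro ⟨_, _, h3⟩; exact hs h3)]
  · rw [if_neg hp]
    apply Finset.sum_eq_zero
    intro r _
    rw [if_neg (by rintro ⟨h1, h2, _⟩; exact hp ⟨h1, h2⟩)]

theorem stmt1 (w N : ℕ) (hw : 3 ≤ w) (hN1 : w + 1 ≤ N) (hN2 : N ≤ 2 * w + 1)
    (A : Fin N → Fin N → Bool) (hA : IsSHF N N w A) (hstd : StandardForm A) :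
    IsPermMatrix A := by
  classical
  set P : Finset (Fin N × Finset (Fin N)) :=
    Finset.univ.filter (fun p => p.2.card = w ∧ p.1 ∉ p.2) with hP
  have hcardP : P.card = N * (N-1).choose w := card_pairs
  have hm1 : ∀ p ∈ P, 1 ≤ (Finset.univ.filter fun r => Separates A r p.1 p.2).card := by
    intro p hp
    rw [hP, Finset.mem_filter] at hp
    obtain ⟨r, hr⟩ := hA p.1 p.2 hp.2.1 hp.2.2
    refine Nat.one_le_iff_ne_zero.mpr (Finset.card_ne_zero_of_mem (a := r) ?_)
    simp only [Finset.mem_filter, Finset.mem_univ, true_and]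
    exact hr
  have hub : ∀ r, sepCount A w r ≤ (N-1).choose w := by
    intro r
    rw [sepCount_eq]
    exact (KB hw hN1 hN2 (hstd r)).1
  have hsumP : ∑ r : Fin N, sepCount A w r
      = ∑ p ∈ P, (Finset.univ.filter fun r : Fin N => Separates A r p.1 p.2).card :=
    sum_sepCount A
  have hle : ∑ r : Fin N, sepCount A w r ≤ N * (N-1).choose w := by
    calc ∑ r : Fin N, sepCount A w r ≤ ∑ _r : Fin N, (N-1).choose w :=
          Finset.sum_le_sum (fun r _ => hub r)
      _ = N * (N-1).choose w := by simp [Finset.sum_const, Finset.card_univ]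
  have hge : N * (N-1).choose w ≤ ∑ r : Fin N, sepCount A w r := by
    rw [hsumP]
    calc N * (N-1).choose w = P.card := hcardP.symm
      _ = ∑ _p ∈ P, 1 := by simp
      _ ≤ ∑ p ∈ P, (Finset.univ.filter fun r : Fin N => Separates A r p.1 p.2).card :=
          Finset.sum_le_sum hm1
  have heq : ∑ r : Fin N, sepCount A w r = N * (N-1).choose w := le_antisymm hle hge
  -- every pair is separated by exactly one row
  have hexact : ∀ p ∈ P, (Finset.univ.filter fun r : Fin N => Separates A r p.1 p.2).card = 1 := by
    by_contra hcon
    push_neg at hcon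
    obtain ⟨q, hq, hne⟩ := hcon
    have h2 : 1 < (Finset.univ.filter fun r : Fin N => Separates A r q.1 q.2).card :=
      lt_of_le_of_ne (hm1 q hq) (Ne.symm hne)
    have hlt : ∑ _p ∈ P, 1 <
        ∑ p ∈ P, (Finset.univ.filter fun r : Fin N => Separates A r p.1 p.2).card :=
      Finset.sum_lt_sum hm1 ⟨q, hq, h2⟩
    rw [← hsumP, heq] at hlt
    simp only [Finset.sum_const, smul_eq_mul, mul_one] at hlt
    omega
  have huniq : ∀ (c : Fin N) (C : Finset (Fin N)), C.card = w → c ∉ C →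
      ∀ r r' : Fin N, Separates A r c C → Separates A r' c C → r = r' := by
    intro c C hC hc r r' hr hr'
    by_contra hne
    have hp : (c, C) ∈ P := by
      rw [hP, Finset.mem_filter]
      exact ⟨Finset.mem_univ _, hC, hc⟩
    have h1 : (Finset.univ.filter fun r₀ : Fin N => Separates A r₀ c C).card = 1 :=
      hexact (c, C) hp
    have hsub : ({r, r'} : Finset (Fin N)) ⊆
        Finset.univ.filter fun r₀ : Fin N => Separates A r₀ c C := by
      intro y hy
      simp only [Finset.mem_insert, Finset.mem_singleton] at hy
      simp only [Finset.mem_filter, Finset.mem_univ, true_and]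
      rcases hy with rfl | rfl
      · exact hr
      · exact hr'
    have h2 : 2 ≤ (Finset.univ.filter fun r₀ : Fin N => Separates A r₀ c C).card := by
      have := Finset.card_le_card hsub
      rwa [Finset.card_pair hne] at this
    omega
  -- each row achieves the bound, hence has type 1 or (type 2 with N = 2w+1)
  have hreq : ∀ r, sepCount A w r = (N-1).choose w := by
    by_contra hcon
    push_neg at hcon
    obtain ⟨r0, hr0⟩ := hcon
    have hlt : ∑ r : Fin N, sepCount A w r < ∑ _r : Fin N, (N-1).choose w :=
      Finset.sum_lt_sum (fun r _ => hub r)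
        ⟨r0, Finset.mem_univ r0, lt_of_le_of_ne (hub r0) hr0⟩
    rw [heq] at hlt
    simp only [Finset.sum_const, Finset.card_univ, Fintype.card_fin, smul_eq_mul] at hlt
    omega
  have htype : ∀ r, rowType A r = 1 ∨ (rowType A r = 2 ∧ N = 2*w+1) := by
    intro r
    apply (KB hw hN1 hN2 (hstd r)).2
    rw [← sepCount_eq]
    exact hreq r
  -- rule out rows of type 2
  have htype1 : ∀ r, rowType A r = 1 := by
    intro r
    rcases htype r with h1 | ⟨h2, hN'⟩
    · exact h1
    exfalso
    obtain ⟨a, b, hab, hab2⟩ := Finset.card_eq_two.mp h2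
    have hAa : A r a = true := by
      have : a ∈ Finset.univ.filter (fun c => A r c = true) := by
        rw [hab2]; simp
      exact (Finset.mem_filter.mp this).2
    have hAb : A r b = true := by
      have : b ∈ Finset.univ.filter (fun c => A r c = true) := by
        rw [hab2]; simp
      exact (Finset.mem_filter.mp this).2
    have hzero : ∀ x : Fin N, x ≠ a → x ≠ b → A r x = false := by
      intro x hxa hxb
      by_contra hx
      have hx' : A r x = true := by simpa using hx
      have : x ∈ Finset.univ.filter (fun c => A r c = true) := by
        simp [hx']
      rw [hab2] at this
      simp at this
      tauto
    -- build C₀ = insert b C' with C' ⊆ {a,b}ᶜ of size w-1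
    have hcompl : (({a, b} : Finset (Fin N))ᶜ).card = N - 2 := by
      rw [Finset.card_compl, Finset.card_pair hab]
      simp
    obtain ⟨C', hC'sub, hC'card⟩ :=
      Finset.exists_subset_card_eq (s := ({a, b} : Finset (Fin N))ᶜ) (n := w - 1)
        (by rw [hcompl]; omega)
    have hbC' : b ∉ C' := by
      intro hb
      have := hC'sub hb
      simp at this
    have haC' : a ∉ C' := by
      intro ha
      have := hC'sub ha
      simp at this
    set C₀ : Finset (Fin N) := insert b C' with hC₀
    have hC₀card : C₀.card = w := by
      rw [hC₀, Finset.card_insert_of_notMem hbC', hC'card]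
      omega
    have haC₀ : a ∉ C₀ := by
      rw [hC₀]
      simp only [Finset.mem_insert]
      push_neg
      exact ⟨hab, haC'⟩
    obtain ⟨r', hr'⟩ := hA a C₀ hC₀card haC₀
    have hrne : r' ≠ r := by
      intro hrr
      subst hrr
      have := hr' b (by rw [hC₀]; simp)
      rw [hAa, hAb] at this
      exact this rfl
    cases hra' : A r' a with
    | false =>
      -- A r' a = false forces C₀ ⊆ ones(r')
      have hsub : C₀ ⊆ Finset.univ.filter (fun c => A r' c = true) := by
        intro x hx
        have := hr' x hx
        rw [hra'] at this
        simp only [Finset.mem_filter, Finset.mem_univ, true_and]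
        cases hAx : A r' x with
        | false => rw [hAx] at this; exact absurd rfl this
        | true => rfl
      have hle' : w ≤ rowType A r' := by
        rw [← hC₀card]
        exact Finset.card_le_card hsub
      rcases htype r' with h1' | ⟨h2', _⟩ <;> omega
    | true =>
      set U : Finset (Fin N) := (Finset.univ.filter (fun c => A r c = true)) ∪
        (Finset.univ.filter (fun c => A r' c = true)) with hU
      have hUcard : U.card ≤ 4 := by
        have h1 := Finset.card_union_le (Finset.univ.filter (fun c => A r c = true))
          (Finset.univ.filter (fun c => A r' c = true))
        have h2' : rowType A r' ≤ 2 := by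
          rcases htype r' with hx | ⟨hx, _⟩ <;> omega
        have h2r : rowType A r = 2 := h2
        unfold rowType at h2r h2'
        rw [hU]
        omega
      have hUc : w ≤ (Uᶜ).card := by
        rw [Finset.card_compl]
        simp only [Fintype.card_fin]
        omega
      obtain ⟨C₁, hC₁sub, hC₁card⟩ := Finset.exists_subset_card_eq hUc
      have hC₁zero : ∀ x ∈ C₁, A r x = false ∧ A r' x = false := by
        intro x hx
        have hxU : x ∉ U := by
          have := hC₁sub hx
          simpa using this
        rw [hU] at hxU
        simp only [Finset.mem_union, Finset.mem_filter, Finset.mem_univ, true_and] at hxU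
        push_neg at hxU
        constructor
        · cases hAx : A r x with
          | false => rfl
          | true => exact absurd hAx hxU.1
        · cases hAx : A r' x with
          | false => rfl
          | true => exact absurd hAx hxU.2
      have haC₁ : a ∉ C₁ := by
        intro ha
        have hfa := (hC₁zero a ha).1
        rw [hAa] at hfa
        exact Bool.noConfusion hfa
      have hsep1 : Separates A r a C₁ := by
        intro x hx
        rw [hAa, (hC₁zero x hx).1]
        simp
      have hsep2 : Separates A r' a C₁ := by
        intro x hx
        rw [hra', (hC₁zero x hx).2]
        simp
      exact hrne (huniq a C₁ hC₁card haC₁ r' r hsep2 hsep1)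
  -- extract positions
  have hxex : ∀ r, ∃ a, Finset.univ.filter (fun c => A r c = true) = {a} :=
    fun r => Finset.card_eq_one.mp (htype1 r)
  choose x hx using hxex
  have hAx : ∀ r, A r (x r) = true := by
    intro r
    have : x r ∈ Finset.univ.filter (fun c => A r c = true) := by
      rw [hx r]; simp
    exact (Finset.mem_filter.mp this).2
  have hAx' : ∀ r c, A r c = true → c = x r := by
    intro r c hc
    have : c ∈ Finset.univ.filter (fun c => A r c = true) := by simp [hc]
    rw [hx r] at this
    simpa using this
  have hAx0 : ∀ r c, c ≠ x r → A r c = false := by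
    intro r c hc
    cases hAc : A r c with
    | false => rfl
    | true => exact absurd (hAx' r c hAc) hc
  -- injectivity of positions
  have hinj : Function.Injective x := by
    intro r r' hxx
    by_contra hne
    obtain ⟨C, hCsub, hCcard⟩ :=
      Finset.exists_subset_card_eq (s := ({x r} : Finset (Fin N))ᶜ) (n := w)
        (by rw [Finset.card_compl]; simp; omega)
    have hxC : x r ∉ C := by
      intro hmem
      have := hCsub hmem
      simp at this
    have hsep : ∀ r₀ : Fin N, x r₀ = x r → Separates A r₀ (x r) C := by
      intro r₀ hr₀ y hy
      have hyne : y ≠ x r₀ := by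
        rw [hr₀]
        intro hy'
        exact hxC (hy' ▸ hy)
      rw [← hr₀, hAx r₀, hAx0 r₀ y hyne]
      simp
    exact hne (huniq (x r) C hCcard hxC r r' (hsep r rfl) (hsep r' hxx.symm))
  have hsurj : Function.Surjective x := Finite.surjective_of_injective hinj
  constructor
  · intro r
    exact ⟨x r, hAx r, fun c hc => hAx' r c hc⟩
  · intro c
    obtain ⟨r, hr⟩ := hsurj c
    refine ⟨r, by rw [← hr]; exact hAx r, ?_⟩
    intro r' hr'
    apply hinj
    rw [hr]
    exact (hAx' r' c hr').symm ▸ rfl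
end

section
/- Let w ≥ 3 and N ≥ w+2 be integers and let A be an SHF(N; N, 2, {1,w}) in standard form. Suppose that every SHF(N−1; N−1, 2, {1,w}) in standard form is a permutation matrix of degree N−1. If A contains a row of type 1 (a row with exactly one entry equal to 1), then A is a permutation matrix of degree N. -/
open Finset

lemma filter_succAbove_card {M : ℕ} (f : Fin (M+1) → Bool) (p : Fin (M+1)) :
    (univ.filter fun c => f c = true).card
      = (univ.filter fun j : Fin M => f (p.succAbove j) = true).card
        + (if f p = true then 1 else 0) := by
  rw [Fin.univ_succAbove M p, filter_cons]
  by_cases hp : f p = true <;>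
    simp only [hp, if_true, if_false, Finset.filter_map, Function.comp_def, Finset.card_cons,
      Finset.card_map, Fin.succAboveEmb, Bool.false_eq_true] <;> simp

lemma rowType_eq_one {N n : ℕ} (A : Fin N → Fin n → Bool) (r : Fin N)
    (h : ∃! c : Fin n, A r c = true) : rowType A r = 1 := by
  obtain ⟨c, hc, hu⟩ := h
  apply Finset.card_eq_one.mpr ⟨c, ?_⟩
  ext x
  simp only [mem_filter, mem_univ, true_and, mem_singleton]
  exact ⟨fun hx => hu x hx, fun hx => hx ▸ hc⟩

lemma main_aux (w M : ℕ) (hw : 3 ≤ w) (hM : w + 1 ≤ M)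
    (A : Fin (M+1) → Fin (M+1) → Bool) (hA : IsSHF (M+1) (M+1) w A)
    (hstd : StandardForm A)
    (hperm : ∀ B : Fin M → Fin M → Bool, IsSHF M M w B → StandardForm B → IsPermMatrix B)
    (r0 c0 : Fin (M+1))
    (hr0 : ∀ c, A r0 c = true ↔ c = c0)
    (hstd' : ∀ r, A r c0 = false → 2 * rowType A r ≤ M) :
    IsPermMatrix A := by
  set B : Fin M → Fin M → Bool := fun i j => A (r0.succAbove i) (c0.succAbove j) with hB
  -- row type relation
  have hrt : ∀ i : Fin M, rowType A (r0.succAbove i)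
      = rowType B i + (if A (r0.succAbove i) c0 = true then 1 else 0) := by
    intro i
    exact filter_succAbove_card (A (r0.succAbove i)) c0
  -- B is an SHF
  have hBshf : IsSHF M M w B := by
    intro c C hC hc
    obtain ⟨r, hr⟩ := hA (c0.succAbove c) (C.map (c0.succAboveEmb))
      (by rw [Finset.card_map, hC])
      (by
        simp only [Finset.mem_map, Fin.succAboveEmb, Function.Embedding.coeFn_mk]
        rintro ⟨x, hx, hxe⟩
        exact hc ((Fin.succAbove_right_injective hxe) ▸ hx))
    have hrne : r ≠ r0 := by
      intro hreq
      rw [hreq] at hr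
      have hCne : C.Nonempty := by
        rw [← Finset.card_pos, hC]; omega
      obtain ⟨x0, hx0⟩ := hCne
      have h1 : A r0 (c0.succAbove c) = false := by
        rw [Bool.eq_false_iff]
        intro h; exact Fin.succAbove_ne c0 c ((hr0 _).mp h)
      have h2 : A r0 (c0.succAbove x0) = false := by
        rw [Bool.eq_false_iff]
        intro h; exact Fin.succAbove_ne c0 x0 ((hr0 _).mp h)
      exact hr (c0.succAbove x0) (Finset.mem_map_of_mem _ hx0) (h1.trans h2.symm)
    obtain ⟨i, hi⟩ := Fin.exists_succAbove_eq hrne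
    refine ⟨i, fun x hx => ?_⟩
    have := hr (c0.succAbove x) (Finset.mem_map_of_mem _ hx)
    simpa [hB, hi] using this
  -- B is in standard form
  have hBstd : StandardForm B := by
    intro i
    have h1 := hrt i
    by_cases hc0 : A (r0.succAbove i) c0 = true
    · have h2 := hstd (r0.succAbove i)
      have h3 : 0 < rowType A (r0.succAbove i) :=
        Finset.card_pos.mpr ⟨c0, by simp [hc0]⟩
      simp only [hc0, if_true] at h1
      omega
    · have h2 := hstd' (r0.succAbove i) (Bool.eq_false_iff.mpr hc0)
      simp only [hc0, if_false] at h1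
      omega
  obtain ⟨PBrow, PBcol⟩ := hperm B hBshf hBstd
  -- column uniqueness for c ≠ c0
  have colUniq : ∀ c : Fin (M+1), c ≠ c0 → ∃! r, A r c = true := by
    intro c hc
    obtain ⟨j, hj⟩ := Fin.exists_succAbove_eq hc
    obtain ⟨i, hi, hiu⟩ := PBcol j
    refine ⟨r0.succAbove i, by simpa [hB, hj] using hi, ?_⟩
    intro r hrc
    have hrne : r ≠ r0 := by
      rintro rfl
      exact hc ((hr0 _).mp hrc)
    obtain ⟨i', hi'⟩ := Fin.exists_succAbove_eq hrne
    have : B i' j = true := by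
      show A (r0.succAbove i') (c0.succAbove j) = true
      rw [hi', hj]; exact hrc
    rw [← hi', hiu i' this]
  -- key: no other row has a 1 in column c0
  have keyc0 : ∀ r, r ≠ r0 → A r c0 = false := by
    intro r1 hr1ne
    by_contra hcon
    have hr1c0 : A r1 c0 = true := by
      cases h : A r1 c0
      · exact absurd h hcon
      · rfl
    obtain ⟨i1, hi1⟩ := Fin.exists_succAbove_eq hr1ne
    obtain ⟨j1, hj1, hj1u⟩ := PBrow i1
    set c1 : Fin (M+1) := c0.succAbove j1 with hc1
    have hc1ne : c1 ≠ c0 := Fin.succAbove_ne c0 j1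
    have hr1c1 : A r1 c1 = true := by rw [← hi1]; exact hj1
    -- build C : w-set containing c0, avoiding c1
    have hcard : w - 1 ≤ (univ \ {c0, c1} : Finset (Fin (M+1))).card := by
      have h2 : ({c0, c1} : Finset (Fin (M+1))).card ≤ 2 := Finset.card_insert_le _ _ |>.trans (by simp)
      have := Finset.card_sdiff_add_card_eq_card (Finset.subset_univ ({c0, c1} : Finset (Fin (M+1))))
      simp only [Finset.card_univ, Fintype.card_fin] at this
      omega
    obtain ⟨t, ht, htc⟩ := Finset.exists_subset_card_eq hcard
    have htc0 : c0 ∉ t := fun h => by simpa using (ht h)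
    have htc1 : c1 ∉ t := fun h => by simpa using (ht h)
    set C : Finset (Fin (M+1)) := insert c0 t with hC
    have hCcard : C.card = w := by
      rw [hC, Finset.card_insert_of_notMem htc0, htc]; omega
    have hc1C : c1 ∉ C := by
      rw [hC]
      simp only [Finset.mem_insert]
      rintro (h | h)
      · exact hc1ne h
      · exact htc1 h
    obtain ⟨r, hr⟩ := hA c1 C hCcard hc1C
    have hrnr0 : r ≠ r0 := by
      intro hreq
      rw [hreq] at hr
      have hx : ∃ x ∈ t, True := by
        have : t.Nonempty := by rw [← Finset.card_pos, htc]; omega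
        obtain ⟨x, hxm⟩ := this; exact ⟨x, hxm, trivial⟩
      obtain ⟨x, hxt, -⟩ := hx
      have hxc0 : x ≠ c0 := fun h => htc0 (h ▸ hxt)
      have h1 : A r0 c1 = false := by
        rw [Bool.eq_false_iff]; intro h; exact hc1ne ((hr0 _).mp h)
      have h2 : A r0 x = false := by
        rw [Bool.eq_false_iff]; intro h; exact hxc0 ((hr0 _).mp h)
      exact hr x (by rw [hC]; exact Finset.mem_insert_of_mem hxt) (h1.trans h2.symm)
    have hrnr1 : r ≠ r1 := by
      rintro rfl
      exact hr c0 (by rw [hC]; exact Finset.mem_insert_self _ _) (hr1c1.trans hr1c0.symm)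
    -- r has a 0 in column c1
    have hrc1 : A r c1 = false := by
      rw [Bool.eq_false_iff]
      intro h
      obtain ⟨ru, -, hu⟩ := colUniq c1 hc1ne
      exact hrnr1 ((hu r h).trans (hu r1 hr1c1).symm)
    -- so every entry of C is 1 in row r
    have hall : ∀ x ∈ C, A r x = true := by
      intro x hx
      have := hr x hx
      rw [hrc1] at this
      cases h : A r x
      · exact absurd h.symm this
      · rfl
    have hsub : C ⊆ univ.filter fun c => A r c = true := by
      intro x hx; simp [hall x hx]
    have hwle : w ≤ rowType A r := by
      rw [← hCcard]; exact Finset.card_le_card hsub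
    -- but row r has at most 2 ones
    obtain ⟨i, hi⟩ := Fin.exists_succAbove_eq hrnr0
    have h1 := hrt i
    have hB1 : rowType B i = 1 := rowType_eq_one B i (PBrow i)
    rw [hi] at h1
    have : rowType A r ≤ 2 := by
      rw [h1, hB1]; split <;> omega
    omega
  -- assemble
  constructor
  · intro r
    by_cases hrr : r = r0
    · subst hrr
      exact ⟨c0, (hr0 c0).mpr rfl, fun c hc => (hr0 c).mp hc⟩
    · obtain ⟨i, hi⟩ := Fin.exists_succAbove_eq hrr
      obtain ⟨j, hj, hju⟩ := PBrow i
      refine ⟨c0.succAbove j, by rw [← hi]; exact hj, ?_⟩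
      intro c hc
      have hcne : c ≠ c0 := by
        rintro rfl
        rw [keyc0 r hrr] at hc
        exact absurd hc (by simp)
      obtain ⟨j', hj'⟩ := Fin.exists_succAbove_eq hcne
      have : B i j' = true := by
        show A (r0.succAbove i) (c0.succAbove j') = true
        rw [hi, hj']; exact hc
      rw [← hj', hju j' this]
  · intro c
    by_cases hcc : c = c0
    · subst hcc
      refine ⟨r0, (hr0 c).mpr rfl, ?_⟩
      intro r hrc
      by_contra hne
      rw [keyc0 r hne] at hrc
      exact absurd hrc (by simp)
    · exact colUniq c hcc


theorem stmt3 (w N : ℕ) (hw : 3 ≤ w) (hN : w + 2 ≤ N)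
    (A : Fin N → Fin N → Bool) (hA : IsSHF N N w A) (hstd : StandardForm A)
    (hperm : ∀ B : Fin (N - 1) → Fin (N - 1) → Bool,
      IsSHF (N - 1) (N - 1) w B → StandardForm B → IsPermMatrix B)
    (hrow : ∃ r : Fin N, rowType A r = 1) :
    IsPermMatrix A := by
  obtain ⟨M, rfl⟩ : ∃ M, N = M + 1 := ⟨N - 1, by omega⟩
  -- (N-1 is definitionally M)
  have hM : w + 1 ≤ M := by omega
  obtain ⟨ra, hra⟩ := hrow
  obtain ⟨c0, hc0⟩ := Finset.card_eq_one.mp hra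
  have hr0A : ∀ c, A ra c = true ↔ c = c0 := by
    intro c
    constructor
    · intro h
      have : c ∈ Finset.univ.filter fun c => A ra c = true := by simp [h]
      rw [hc0] at this; simpa using this
    · intro h
      rw [h]
      have : c0 ∈ Finset.univ.filter fun c => A ra c = true := by
        rw [hc0]; simp
      simpa using this
  -- flip rows of weight (M+1)/2 having 0 in column c0
  set A' : Fin (M+1) → Fin (M+1) → Bool := fun r c =>
    if 2 * rowType A r = M + 1 ∧ A r c0 = false then !(A r c) else A r c with hA'def
  have hrt' : ∀ r, (2 * rowType A r = M + 1 ∧ A r c0 = false) →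
      rowType A' r = (M + 1) - rowType A r := by
    intro r hcond
    have h1 : (univ.filter fun c => A' r c = true)
        = univ.filter (fun c => ¬ (A r c = true)) := by
      ext x
      simp only [mem_filter, mem_univ, true_and, hA'def, hcond, if_true]
      cases A r x <;> simp
    have h2 := Finset.card_filter_add_card_filter_not
      (s := (univ : Finset (Fin (M+1)))) (p := fun c => A r c = true)
    simp only [Finset.card_univ, Fintype.card_fin] at h2
    show (univ.filter fun c => A' r c = true).card = (M + 1) - rowType A r
    rw [h1]
    have : rowType A r = (univ.filter fun c => A r c = true).card := rfl
    omega
  have hsame : ∀ r, ¬ (2 * rowType A r = M + 1 ∧ A r c0 = false) → A' r = A r := by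
    intro r hcond
    funext c
    simp [hA'def, hcond]
  have hrtle : ∀ r, rowType A r ≤ M + 1 := by
    intro r
    have := Finset.card_filter_le (univ : Finset (Fin (M+1))) (fun c => A r c = true)
    simpa [rowType] using this
  -- A' is an SHF
  have hA'shf : IsSHF (M+1) (M+1) w A' := by
    intro c C hC hcC
    obtain ⟨r, hr⟩ := hA c C hC hcC
    refine ⟨r, fun x hx => ?_⟩
    by_cases hcond : 2 * rowType A r = M + 1 ∧ A r c0 = false
    · simp only [hA'def, hcond, if_true]
      intro h
      exact hr x hx (Bool.not_inj h)
    · simp only [hA'def, hcond, if_false]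
      exact hr x hx
  -- A' is in standard form
  have hA'std : StandardForm A' := by
    intro r
    by_cases hcond : 2 * rowType A r = M + 1 ∧ A r c0 = false
    · rw [hrt' r hcond]
      have := hrtle r
      omega
    · rw [show rowType A' r = rowType A r by rw [rowType, hsame r hcond]; rfl]
      exact hstd r
  -- row ra is unchanged
  have hraeq : A' ra = A ra := by
    apply hsame
    rintro ⟨h1, -⟩
    rw [hra] at h1
    omega
  have hr0' : ∀ c, A' ra c = true ↔ c = c0 := by
    intro c; rw [hraeq]; exact hr0A c
  -- standard' property
  have hstd'' : ∀ r, A' r c0 = false → 2 * rowType A' r ≤ M := by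
    intro r h
    by_cases hcond : 2 * rowType A r = M + 1 ∧ A r c0 = false
    · exfalso
      rw [hA'def] at h
      simp only [hcond, if_true, hcond.2] at h
      exact absurd h (by simp)
    · rw [show rowType A' r = rowType A r by rw [rowType, hsame r hcond]; rfl]
      rw [hsame r hcond] at h
      have := hstd r
      rcases Decidable.not_and_iff_or_not.mp hcond with h1 | h1
      · omega
      · exact absurd h (by simpa using h1)
  have PA' : IsPermMatrix A' := main_aux w M hw hM A' hA'shf hA'std hperm ra c0 hr0' hstd''
  have hnone : ∀ r, ¬ (2 * rowType A r = M + 1 ∧ A r c0 = false) := by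
    intro r hcond
    have h1 := hrt' r hcond
    have h2 : rowType A' r = 1 := rowType_eq_one A' r (PA'.1 r)
    have := hrtle r
    omega
  have : A' = A := by
    funext r c
    simp [hA'def, hnone r]
  rwa [this] at PA'
end

section
/- Let w ≥ 4 and let N be an integer with w+1 ≤ N ≤ 3w. Let A be an SHF(N; N, 2, {1,w}) whose first row is of type i₀ for some i₀ ≤ w and whose entry in row 1 and column 1 equals 1. Then the (N−1) × (N−1) matrix B obtained from A by deleting the first row and the first column is an SHF(N−1; N−1, 2, {1,w}). -/
theorem key (w N : ℕ) (hw : 4 ≤ w) (hN2 : N ≤ 3 * w)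
    (A : Fin N → Fin N → Bool) (hA : IsSHF N N w A) (o : Fin N)
    (hones : (Finset.univ.filter fun γ => A o γ = true).card ≤ w)
    (hAoo : A o o = true) (c : Fin N) (C : Finset (Fin N)) (hcC : c ∉ C)
    (hCcard : C.card = w) (hoc : o ≠ c) (hoC : o ∉ C) :
    ∃ ρ : Fin N, ρ ≠ o ∧ ∀ x ∈ C, A ρ c ≠ A ρ x := by
  classical
  by_contra hcon
  -- helper: binary alphabet
  have bne : ∀ a b : Bool, (a ≠ b) ↔ a = !b := by decide
  have bne' : ∀ a b : Bool, (a ≠ b) ↔ b = !a := by decide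
  -- (A) every row other than o agrees with c somewhere in C
  have hAg : ∀ ρ : Fin N, ρ ≠ o → ∃ x ∈ C, A ρ c = A ρ x := by
    intro ρ hρ
    by_contra hx
    push_neg at hx
    exact hcon ⟨ρ, hρ, hx⟩
  -- row o pattern
  have hsep0 : ∀ x ∈ C, A o c ≠ A o x := by
    obtain ⟨ρ, hρ⟩ := hA c C hCcard hcC
    rcases eq_or_ne ρ o with rfl | hne
    · exact hρ
    · exact absurd ⟨ρ, hne, hρ⟩ hcon
  have hAoc : A o c = true := by
    by_contra hoc'
    rw [Bool.not_eq_true] at hoc'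
    have hsub : insert o C ⊆ Finset.univ.filter fun γ => A o γ = true := by
      intro γ hγ
      rcases Finset.mem_insert.1 hγ with rfl | hγ
      · simp [hAoo]
      · have := hsep0 γ hγ
        rw [hoc'] at this
        simp only [Finset.mem_filter, Finset.mem_univ, true_and]
        cases h : A o γ
        · exact absurd h.symm this
        · rfl
    have := Finset.card_le_card hsub
    rw [Finset.card_insert_of_notMem hoC, hCcard] at this
    omega
  have hC0 : ∀ x ∈ C, A o x = false := by
    intro x hx
    have := hsep0 x hx
    rw [hAoc] at this
    cases h : A o x
    · rfl
    · exact absurd h.symm this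
  have happ : ∀ (γ : Fin N) (D : Finset (Fin N)), D.card = w → γ ∉ D →
      ∃ ρ, ∀ x ∈ D, A ρ x = !A ρ γ := by
    intro γ D h1 h2
    obtain ⟨ρ, hρ⟩ := hA γ D h1 h2
    refine ⟨ρ, fun x hx => ?_⟩
    have h := hρ x hx
    revert h
    cases A ρ γ <;> cases A ρ x <;> decide
  have hrex : ∀ x : Fin N, ∃ ρ, x ∈ C →
      (A ρ x = A ρ c ∧ A ρ o = !A ρ c ∧ (∀ z ∈ C.erase x, A ρ z = !A ρ c) ∧ ρ ≠ o) := by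
    intro x
    by_cases hx : x ∈ C
    · obtain ⟨ρ, hρ⟩ := happ c (insert o (C.erase x))
        (by
          rw [Finset.card_insert_of_notMem (fun h => hoC (Finset.mem_of_mem_erase h)),
            Finset.card_erase_of_mem hx, hCcard]
          omega)
        (by
          intro h
          rcases Finset.mem_insert.1 h with h | h
          · exact hoc h.symm
          · exact hcC (Finset.mem_of_mem_erase h))
      have hρo : A ρ o = !A ρ c := hρ o (Finset.mem_insert_self _ _)
      have hρz : ∀ z ∈ C.erase x, A ρ z = !A ρ c := fun z hz =>
        hρ z (Finset.mem_insert_of_mem hz)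
      have hρne : ρ ≠ o := by
        intro h
        rw [h, hAoo, hAoc] at hρo
        exact absurd hρo (by decide)
      obtain ⟨x', hx', hxx'⟩ := hAg ρ hρne
      have : x' = x := by
        by_contra hne
        have := hρz x' (Finset.mem_erase.2 ⟨hne, hx'⟩)
        rw [← hxx'] at this
        revert this
        cases A ρ c <;> decide
      exact ⟨ρ, fun _ => ⟨this ▸ hxx'.symm, hρo, hρz, hρne⟩⟩
    · exact ⟨o, fun h => absurd h hx⟩
  choose r hr using hrex
  -- the u-family
  have huex : ∀ x : Fin N, ∃ ρ, x ∈ C →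
      (A ρ x = !A ρ c ∧ (∀ z ∈ C.erase x, A ρ z = A ρ c) ∧ ρ ≠ o) := by
    intro x
    by_cases hx : x ∈ C
    · obtain ⟨ρ, hρ⟩ := happ x (insert c (C.erase x))
        (by
          rw [Finset.card_insert_of_notMem (fun h => hcC (Finset.mem_of_mem_erase h)),
            Finset.card_erase_of_mem hx, hCcard]
          omega)
        (by
          intro h
          rcases Finset.mem_insert.1 h with h | h
          · exact hcC (h ▸ hx)
          · exact Finset.notMem_erase x C h)
      have hρc : A ρ c = !A ρ x := hρ c (Finset.mem_insert_self _ _)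
      have hρx : A ρ x = !A ρ c := by rw [hρc]; cases A ρ x <;> rfl
      have hρz : ∀ z ∈ C.erase x, A ρ z = A ρ c := by
        intro z hz
        have := hρ z (Finset.mem_insert_of_mem hz)
        rw [this, hρc]
      have hρne : ρ ≠ o := by
        intro h
        obtain ⟨z, hz⟩ : (C.erase x).Nonempty := by
          rw [← Finset.card_pos, Finset.card_erase_of_mem hx, hCcard]; omega
        have h1 := hρz z hz
        rw [h, hAoc, hC0 z (Finset.mem_of_mem_erase hz)] at h1
        exact absurd h1 (by decide)
      exact ⟨ρ, fun _ => ⟨hρx, hρz, hρne⟩⟩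
    · exact ⟨o, fun h => absurd h hx⟩
  choose u hu using huex
  have hthird : ∀ x ∈ C, ∀ y ∈ C, ∃ z ∈ C, z ≠ x ∧ z ≠ y := by
    intro x hx y hy
    have : ((C.erase x).erase y).Nonempty := by
      rw [← Finset.card_pos]
      have h1 := Finset.card_erase_le (s := C.erase x) (a := y)
      have h2 : w - 1 ≤ (C.erase x).card := by
        rw [Finset.card_erase_of_mem hx, hCcard]
      have h3 : (C.erase x).card - 1 ≤ ((C.erase x).erase y).card :=
        Finset.pred_card_le_card_erase
      omega
    obtain ⟨z, hz⟩ := this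
    have hz1 := Finset.mem_of_mem_erase hz
    exact ⟨z, Finset.mem_of_mem_erase hz1, (Finset.mem_erase.1 hz1).1,
      (Finset.mem_erase.1 hz).1⟩
  have hrinj : Set.InjOn r C := by
    intro x hx y hy hxy
    by_contra hne
    have h1 := (hr x hx).1
    have h2 := (hr y hy).2.2.1 x (Finset.mem_erase.2 ⟨hne, hx⟩)
    rw [hxy] at h1
    rw [h1] at h2
    revert h2; cases A (r y) c <;> decide
  have huinj : Set.InjOn u C := by
    intro x hx y hy hxy
    by_contra hne
    have h1 := (hu x hx).1
    have h2 := (hu y hy).2.1 x (Finset.mem_erase.2 ⟨hne, hx⟩)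
    rw [hxy] at h1
    rw [h1] at h2
    revert h2; cases A (u y) c <;> decide
  have hrune : ∀ x ∈ C, ∀ y ∈ C, r x ≠ u y := by
    intro x hx y hy heq
    rcases eq_or_ne x y with rfl | hne
    · have h1 := (hr x hx).1
      have h2 := (hu x hx).1
      rw [heq] at h1
      rw [h1] at h2
      revert h2; cases A (u x) c <;> decide
    · obtain ⟨z, hz, hzx, hzy⟩ := hthird x hx y hy
      have h1 := (hr x hx).2.2.1 z (Finset.mem_erase.2 ⟨hzx, hz⟩)
      have h2 := (hu y hy).2.1 z (Finset.mem_erase.2 ⟨hzy, hz⟩)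
      rw [heq] at h1
      rw [h1] at h2
      revert h2; cases A (u y) c <;> decide
  -- the structured rows
  set R : Finset (Fin N) := insert o (C.image r ∪ C.image u) with hRdef
  have hRcard : R.card = 2 * w + 1 := by
    have hno : o ∉ C.image r ∪ C.image u := by
      intro h
      rcases Finset.mem_union.1 h with h | h <;>
        obtain ⟨x, hx, hxo⟩ := Finset.mem_image.1 h
      · exact (hr x hx).2.2.2 hxo
      · exact (hu x hx).2.2 hxo
    have hdisj : Disjoint (C.image r) (C.image u) := by
      rw [Finset.disjoint_left]
      intro ρ h1 h2
      obtain ⟨x, hx, hxρ⟩ := Finset.mem_image.1 h1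
      obtain ⟨y, hy, hyρ⟩ := Finset.mem_image.1 h2
      exact hrune x hx y hy (hxρ.trans hyρ.symm)
    rw [hRdef, Finset.card_insert_of_notMem hno, Finset.card_union_of_disjoint hdisj,
      Finset.card_image_of_injOn hrinj, Finset.card_image_of_injOn huinj, hCcard]
    omega
  set F : Finset (Fin N) := Finset.univ \ R with hFdef
  have hFcard : F.card + (2 * w + 1) = N := by
    rw [hFdef, Finset.card_sdiff_of_subset (Finset.subset_univ R), hRcard, Finset.card_univ,
      Fintype.card_fin]
    have : R.card ≤ N := by
      have := Finset.card_le_univ R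
      rwa [Fintype.card_fin] at this
    omega
  have hclass : ∀ ρ : Fin N, ρ ∈ F ∨ ρ = o ∨ (∃ x ∈ C, ρ = r x) ∨ (∃ x ∈ C, ρ = u x) := by
    intro ρ
    by_cases h : ρ ∈ F
    · exact Or.inl h
    · right
      rw [hFdef, Finset.mem_sdiff] at h
      push_neg at h
      have := h (Finset.mem_univ ρ)
      rw [hRdef, Finset.mem_insert, Finset.mem_union] at this
      rcases this with h | h | h
      · exact Or.inl h
      · obtain ⟨x, hx, hxρ⟩ := Finset.mem_image.1 h
        exact Or.inr (Or.inl ⟨x, hx, hxρ.symm⟩)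
      · obtain ⟨x, hx, hxρ⟩ := Finset.mem_image.1 h
        exact Or.inr (Or.inr ⟨x, hx, hxρ.symm⟩)
  -- candidate columns
  set TT : Finset (Fin N) := Finset.univ.filter (fun τ => τ ∉ C ∧ A o τ = false) with hTTdef
  have hTTcard : F.card + 1 ≤ TT.card := by
    have hcover : Finset.univ ⊆ TT ∪ (C ∪ Finset.univ.filter fun γ => A o γ = true) := by
      intro γ _
      by_cases h1 : γ ∈ C
      · exact Finset.mem_union.2 (Or.inr (Finset.mem_union.2 (Or.inl h1)))
      · cases h2 : A o γ
        · exact Finset.mem_union.2 (Or.inl (by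
            rw [hTTdef]; exact Finset.mem_filter.2 ⟨Finset.mem_univ _, h1, h2⟩))
        · exact Finset.mem_union.2 (Or.inr (Finset.mem_union.2 (Or.inr
            (Finset.mem_filter.2 ⟨Finset.mem_univ _, h2⟩))))
    have h1 := Finset.card_le_card hcover
    have h2 := Finset.card_union_le TT (C ∪ Finset.univ.filter fun γ => A o γ = true)
    have h3 := Finset.card_union_le C (Finset.univ.filter fun γ => A o γ = true)
    rw [Finset.card_univ, Fintype.card_fin] at h1
    have h4 := h1.trans (h2.trans (Nat.add_le_add_left h3 TT.card))
    omega
  -- choose a non-private t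
  have ht : ∃ t ∈ TT, ∀ f ∈ F, ∃ γ, γ ≠ t ∧ A f γ = A f t := by
    by_contra hcon2
    push_neg at hcon2
    have hp : ∀ τ : Fin N, ∃ f, τ ∈ TT → (f ∈ F ∧ ∀ γ, γ ≠ τ → A f γ = !A f τ) := by
      intro τ
      by_cases hτ : τ ∈ TT
      · obtain ⟨f, hf, hpriv⟩ := hcon2 τ hτ
        refine ⟨f, fun _ => ⟨hf, fun γ hγ => ?_⟩⟩
        have := hpriv γ hγ
        revert this; cases A f γ <;> cases A f τ <;> decide
      · exact ⟨o, fun h => absurd h hτ⟩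
    choose pf hpf using hp
    have hinj : Set.InjOn pf TT := by
      intro τ1 h1 τ2 h2 heq
      by_contra hne
      have ho1 : o ≠ τ1 := by
        intro h
        have := (Finset.mem_filter.1 (hTTdef ▸ h1)).2.2
        rw [← h, hAoo] at this
        exact absurd this (by decide)
      have ho2 : o ≠ τ2 := by
        intro h
        have := (Finset.mem_filter.1 (hTTdef ▸ h2)).2.2
        rw [← h, hAoo] at this
        exact absurd this (by decide)
      have e1 := (hpf τ1 h1).2 o ho1
      have e2 := (hpf τ2 h2).2 o ho2
      have e3 := (hpf τ1 h1).2 τ2 (Ne.symm hne)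
      rw [heq] at e1 e3
      rw [e1] at e2
      rw [e3] at e2
      simp at e2
    have := Finset.card_le_card_of_injOn pf (fun τ hτ => (hpf τ hτ).1) hinj
    omega
  obtain ⟨t, htTT, hnp⟩ := ht
  have htC : t ∉ C := (Finset.mem_filter.1 (hTTdef ▸ htTT)).2.1
  have hto : A o t = false := (Finset.mem_filter.1 (hTTdef ▸ htTT)).2.2
  have htno : t ≠ o := by intro h; rw [h, hAoo] at hto; exact absurd hto (by decide)
  have htnc : t ≠ c := by intro h; rw [h, hAoc] at hto; exact absurd hto (by decide)
  -- the hitter row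
  have hhit : ∃ h ∈ F, ∀ z ∈ C, A h z = !A h t := by
    obtain ⟨ρ, hρ⟩ := happ t C hCcard htC
    rcases hclass ρ with hF | rfl | ⟨x, hx, rfl⟩ | ⟨x, hx, rfl⟩
    · exact ⟨ρ, hF, hρ⟩
    · obtain ⟨z, hz⟩ : C.Nonempty := by rw [← Finset.card_pos, hCcard]; omega
      have h1 := hρ z hz
      rw [hC0 z hz, hto] at h1
      exact absurd h1 (by decide)
    · obtain ⟨z, hz, hzx, _⟩ := hthird x hx x hx
      have h1 := hρ x hx
      have h2 := hρ z hz
      have h3 := (hr x hx).1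
      have h4 := (hr x hx).2.2.1 z (Finset.mem_erase.2 ⟨hzx, hz⟩)
      rw [h3] at h1
      rw [h4, h1] at h2
      simp at h2
    · obtain ⟨z, hz, hzx, _⟩ := hthird x hx x hx
      have h1 := hρ x hx
      have h2 := hρ z hz
      have h3 := (hu x hx).1
      have h4 := (hu x hx).2.1 z (Finset.mem_erase.2 ⟨hzx, hz⟩)
      rw [h3] at h1
      rw [h4] at h2
      rw [h2] at h1
      simp at h1
  obtain ⟨h, hhF, hh⟩ := hhit
  have hfourth : ∀ x ∈ C, ∀ y ∈ C, ∀ a ∈ C, ∃ z ∈ C, z ≠ x ∧ z ≠ y ∧ z ≠ a := by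
    intro x hx y hy a ha
    have : (((C.erase x).erase y).erase a).Nonempty := by
      rw [← Finset.card_pos]
      have h1 : w - 1 ≤ (C.erase x).card := by rw [Finset.card_erase_of_mem hx, hCcard]
      have h2 : (C.erase x).card - 1 ≤ ((C.erase x).erase y).card :=
        Finset.pred_card_le_card_erase
      have h3 : ((C.erase x).erase y).card - 1 ≤ (((C.erase x).erase y).erase a).card :=
        Finset.pred_card_le_card_erase
      omega
    obtain ⟨z, hz⟩ := this
    have hz1 := Finset.mem_of_mem_erase hz
    have hz2 := Finset.mem_of_mem_erase hz1
    exact ⟨z, Finset.mem_of_mem_erase hz2, (Finset.mem_erase.1 hz2).1,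
      (Finset.mem_erase.1 hz1).1, (Finset.mem_erase.1 hz).1⟩
  -- the set X
  set X : Finset (Fin N) :=
    C.filter (fun x => A (u x) o = A (u x) c ∧ A (u x) t = !A (u x) c) with hXdef
  -- existence of the f-rows
  have hfex : ∀ x : Fin N, ∃ φ, x ∈ X → (φ ∈ F ∧ A φ x = !A φ c ∧ A φ t = A φ c ∧
      ∀ z ∈ C.erase x, A φ z = A φ c) := by
    intro x
    by_cases hx : x ∈ X
    · obtain ⟨hxC, hux⟩ := Finset.mem_filter.1 (hXdef ▸ hx)
      -- the killer of the pair (x, C\{x,y} ∪ {t,c}) for y ∈ C.erase x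
      have hkill : ∀ y ∈ C.erase x, ∃ ρ ∈ F, A ρ x = !A ρ c ∧ A ρ t = A ρ c ∧
          (∀ z ∈ (C.erase x).erase y, A ρ z = A ρ c) := by
        intro y hy
        obtain ⟨ρ, hρ⟩ := happ x (insert t (insert c ((C.erase x).erase y)))
          (by
            rw [Finset.card_insert_of_notMem, Finset.card_insert_of_notMem,
              Finset.card_erase_of_mem hy, Finset.card_erase_of_mem hxC, hCcard]
            · omega
            · intro hc
              exact hcC (Finset.mem_of_mem_erase (Finset.mem_of_mem_erase hc))
            · intro ht
              rcases Finset.mem_insert.1 ht with ht | ht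
              · exact htnc ht
              · exact htC (Finset.mem_of_mem_erase (Finset.mem_of_mem_erase ht)))
          (by
            intro hmem
            rcases Finset.mem_insert.1 hmem with h1 | h1
            · exact htC (h1 ▸ hxC)
            · rcases Finset.mem_insert.1 h1 with h2 | h2
              · exact hcC (h2 ▸ hxC)
              · exact (Finset.mem_erase.1 (Finset.mem_of_mem_erase h2)).1 rfl)
        have hρt : A ρ t = !A ρ x := hρ t (Finset.mem_insert_self _ _)
        have hρc : A ρ c = !A ρ x :=
          hρ c (Finset.mem_insert_of_mem (Finset.mem_insert_self _ _))
        have hρz : ∀ z ∈ (C.erase x).erase y, A ρ z = !A ρ x := fun z hz =>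
          hρ z (Finset.mem_insert_of_mem (Finset.mem_insert_of_mem hz))
        have hρxc : A ρ x = !A ρ c := by rw [hρc]; cases A ρ x <;> rfl
        have hρtc : A ρ t = A ρ c := by rw [hρt, hρc]
        have hρzc : ∀ z ∈ (C.erase x).erase y, A ρ z = A ρ c := by
          intro z hz
          rw [hρz z hz, hρc]
        rcases hclass ρ with hF | rfl | ⟨a, ha, rfl⟩ | ⟨a, ha, rfl⟩
        · exact ⟨ρ, hF, hρxc, hρtc, hρzc⟩
        · rw [hC0 x hxC, hto] at hρt
          exact absurd hρt (by decide)
        · rcases eq_or_ne a x with rfl | hax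
          · have h1 := (hr a ha).1
            rw [h1] at hρc
            simp at hρc
          · obtain ⟨z', hz', hz'x, hz'y, hz'a⟩ :=
              hfourth x hxC y (Finset.mem_of_mem_erase hy) a ha
            have h1 := (hr a ha).2.2.1 z' (Finset.mem_erase.2 ⟨hz'a, hz'⟩)
            have h3 := hρzc z' (Finset.mem_erase.2 ⟨hz'y, Finset.mem_erase.2 ⟨hz'x, hz'⟩⟩)
            have h2 := (hr a ha).2.2.1 x (Finset.mem_erase.2 ⟨hax.symm, hxC⟩)
            rw [h1] at h3
            rw [h2] at hρc
            rw [h3] at hρc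
            simp at hρc
        · rcases eq_or_ne a x with rfl | hax
          · have h1 := (hu a ha).1
            rw [hρtc] at hux
            simp at hux
          · have h1 := (hu a ha).2.1 x (Finset.mem_erase.2 ⟨hax.symm, hxC⟩)
            rw [h1] at hρc
            simp at hρc
      -- choose killers
      have hkill' : ∀ y : Fin N, ∃ ρ, y ∈ C.erase x → (ρ ∈ F ∧ A ρ x = !A ρ c ∧
          A ρ t = A ρ c ∧ (∀ z ∈ (C.erase x).erase y, A ρ z = A ρ c)) := by
        intro y
        by_cases hy : y ∈ C.erase x
        · obtain ⟨ρ, hρ⟩ := hkill y hy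
          exact ⟨ρ, fun _ => hρ⟩
        · exact ⟨o, fun hy' => absurd hy' hy⟩
      choose ρf hρf using hkill'
      by_cases hgood : ∃ y ∈ C.erase x, A (ρf y) y = A (ρf y) c
      · obtain ⟨y, hy, hgy⟩ := hgood
        obtain ⟨hF1, h1, h2, h3⟩ := hρf y hy
        refine ⟨ρf y, fun _ => ⟨hF1, h1, h2, fun z hz => ?_⟩⟩
        rcases eq_or_ne z y with rfl | hzy
        · exact hgy
        · exact h3 z (Finset.mem_erase.2 ⟨hzy, hz⟩)
      · push_neg at hgood
        exfalso
        have hbad : ∀ y ∈ C.erase x, A (ρf y) y = !A (ρf y) c := by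
          intro y hy
          have := hgood y hy
          revert this
          cases A (ρf y) y <;> cases A (ρf y) c <;> decide
        have hinj : Set.InjOn ρf (C.erase x) := by
          intro y1 hy1 y2 hy2 heq
          by_contra hne
          have e1 := hbad y1 hy1
          have e2 := (hρf y2 hy2).2.2.2 y1 (Finset.mem_erase.2 ⟨hne, hy1⟩)
          rw [heq] at e1
          rw [e1] at e2
          simp at e2
        have hhim : h ∉ (C.erase x).image ρf := by
          intro hmem
          obtain ⟨y, hy, hyh⟩ := Finset.mem_image.1 hmem
          obtain ⟨z'', hz'', hz''x, hz''y⟩ :=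
            hthird x hxC y (Finset.mem_of_mem_erase hy)
          have e1 := (hρf y hy).2.1
          have e2 := (hρf y hy).2.2.2 z''
            (Finset.mem_erase.2 ⟨hz''y, Finset.mem_erase.2 ⟨hz''x, hz''⟩⟩)
          have e3 := hh x hxC
          have e4 := hh z'' hz''
          rw [hyh] at e1 e2
          rw [e3] at e1
          rw [e4] at e2
          rw [e2] at e1
          simp at e1
        have hsub : insert h ((C.erase x).image ρf) ⊆ F := by
          intro ρ hρ
          rcases Finset.mem_insert.1 hρ with rfl | hρ
          · exact hhF
          · obtain ⟨y, hy, hyρ⟩ := Finset.mem_image.1 hρ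
            exact hyρ ▸ (hρf y hy).1
        have hcard : (insert h ((C.erase x).image ρf)).card = w := by
          rw [Finset.card_insert_of_notMem hhim, Finset.card_image_of_injOn hinj,
            Finset.card_erase_of_mem hxC, hCcard]
          omega
        have := Finset.card_le_card hsub
        rw [hcard] at this
        omega
    · exact ⟨o, fun hx' => absurd hx' hx⟩
  choose f hf using hfex
  set needy : Finset (Fin N) :=
    F.filter (fun ρ => A ρ c = A ρ o ∧ A ρ t = !A ρ c) with hNdef
  have hcost : X.card + needy.card < F.card := by
    have hkw : F.card ≤ w - 1 := by omega
    have hXC : X ⊆ C := by rw [hXdef]; exact Finset.filter_subset _ _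
    -- h is not an f-row and h would be needy if in G
    have hhf : ∀ x ∈ X, h ≠ f x := by
      intro x hx heq
      obtain ⟨z, hz, hzx, -⟩ := hthird x (hXC hx) x (hXC hx)
      have e1 := (hf x hx).2.1
      have e2 := (hf x hx).2.2.2 z (Finset.mem_erase.2 ⟨hzx, hz⟩)
      rw [← heq] at e1 e2
      have e3 := hh x (hXC hx)
      have e4 := hh z hz
      rw [e3] at e1
      rw [e4] at e2
      rw [e2] at e1
      simp at e1
    have hfinj : Set.InjOn f X := by
      intro x hx y hy heq
      by_contra hne
      have e1 := (hf x hx).2.1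
      have e2 := (hf y hy).2.2.2 x (Finset.mem_erase.2 ⟨hne, hXC hx⟩)
      rw [heq] at e1
      rw [e1] at e2
      simp at e2
    have hfnn : ∀ x ∈ X, f x ∉ needy := by
      intro x hx hmem
      rw [hNdef] at hmem
      have e1 := (Finset.mem_filter.1 hmem).2.2
      have e2 := (hf x hx).2.2.1
      rw [e2] at e1
      simp at e1
    have hGsub : X.image f ∪ needy ⊆ F := by
      intro ρ hρ
      rcases Finset.mem_union.1 hρ with hρ | hρ
      · obtain ⟨x, hx, hxρ⟩ := Finset.mem_image.1 hρ
        exact hxρ ▸ (hf x hx).1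
      · exact (hNdef ▸ Finset.filter_subset _ F) hρ
    have hGcard : (X.image f ∪ needy).card = X.card + needy.card := by
      rw [Finset.card_union_of_disjoint, Finset.card_image_of_injOn hfinj]
      rw [Finset.disjoint_left]
      intro ρ h1 h2
      obtain ⟨x, hx, hxρ⟩ := Finset.mem_image.1 h1
      exact hfnn x hx (hxρ ▸ h2)
    have hle : X.card + needy.card ≤ F.card := by
      have := Finset.card_le_card hGsub
      rwa [hGcard] at this
    by_contra hcon
    push_neg at hcon
    have hGF : X.image f ∪ needy = F := by
      apply Finset.eq_of_subset_of_card_le hGsub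
      omega
    -- step 1 : for z ∈ C \ X the row u z satisfies A (u z) o = !A (u z) c
    have hanti : ∀ z ∈ C, z ∉ X → A (u z) o = !A (u z) c := by
      intro z hz hzX
      obtain ⟨ρ, hρ⟩ := happ o (insert c (C.erase z))
        (by
          rw [Finset.card_insert_of_notMem (fun hc' => hcC (Finset.mem_of_mem_erase hc')),
            Finset.card_erase_of_mem hz, hCcard]
          omega)
        (by
          intro hmem
          rcases Finset.mem_insert.1 hmem with h1 | h1
          · exact hoc h1
          · exact hoC (Finset.mem_of_mem_erase h1))
      have hρc : A ρ c = !A ρ o := hρ c (Finset.mem_insert_self _ _)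
      have hρz : ∀ z' ∈ C.erase z, A ρ z' = !A ρ o := fun z' hz' =>
        hρ z' (Finset.mem_insert_of_mem hz')
      rcases hclass ρ with hF | rfl | ⟨a, ha, rfl⟩ | ⟨a, ha, rfl⟩
      · exfalso
        rw [← hGF] at hF
        rcases Finset.mem_union.1 hF with hF | hF
        · obtain ⟨x, hx, hxρ⟩ := Finset.mem_image.1 hF
          rcases eq_or_ne x z with rfl | hxz
          · exact hzX hx
          · have e1 := (hf x hx).2.1
            rw [hxρ] at e1
            have e2 := hρz x (Finset.mem_erase.2 ⟨hxz, hXC hx⟩)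
            rw [e1] at e2
            rw [hρc] at e2
            simp at e2
        · rw [hNdef] at hF
          have e1 := (Finset.mem_filter.1 hF).2.1
          rw [e1] at hρc
          simp at hρc
      · rw [hAoo, hAoc] at hρc
        exact absurd hρc (by decide)
      · exfalso
        rcases eq_or_ne a z with rfl | haz
        · obtain ⟨z', hz', hz'a, -⟩ := hthird a ha a ha
          have e1 := (hr a ha).2.2.1 z' (Finset.mem_erase.2 ⟨hz'a, hz'⟩)
          have e2 := hρz z' (Finset.mem_erase.2 ⟨hz'a, hz'⟩)
          have e3 := (hr a ha).2.1
          rw [e1] at e2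
          rw [e3] at e2
          simp at e2
        · obtain ⟨z', hz', hz'a, hz'z⟩ := hthird a ha z hz
          have e1 := (hr a ha).2.2.1 z' (Finset.mem_erase.2 ⟨hz'a, hz'⟩)
          have e2 := hρz z' (Finset.mem_erase.2 ⟨hz'z, hz'⟩)
          have e3 := (hr a ha).2.1
          rw [e1] at e2
          rw [e3] at e2
          simp at e2
      · rcases eq_or_ne a z with rfl | haz
        · rw [hρc]
          cases A (u a) o <;> rfl
        · exfalso
          have e1 := (hu a ha).1
          have e2 := hρz a (Finset.mem_erase.2 ⟨haz, ha⟩)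
          rw [e1] at e2
          rw [hρc] at e2
          simp at e2
    -- step 2 : for z ∈ C \ X there is a star row in needy
    have hstar : ∀ z ∈ C, z ∉ X → ∃ n ∈ needy, A n z = !A n c ∧
        ∀ y ∈ C.erase z, A n y = A n c := by
      intro z hz hzX
      have hkill : ∀ y ∈ C.erase z, ∃ n ∈ needy, A n z = !A n c ∧
          ∀ z' ∈ (C.erase z).erase y, A n z' = A n c := by
        intro y hy
        obtain ⟨ρ, hρ⟩ := happ z (insert o (insert c ((C.erase z).erase y)))
          (by
            rw [Finset.card_insert_of_notMem, Finset.card_insert_of_notMem,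
              Finset.card_erase_of_mem hy, Finset.card_erase_of_mem hz, hCcard]
            · omega
            · intro hc'
              exact hcC (Finset.mem_of_mem_erase (Finset.mem_of_mem_erase hc'))
            · intro ho'
              rcases Finset.mem_insert.1 ho' with h1 | h1
              · exact hoc h1
              · exact hoC (Finset.mem_of_mem_erase (Finset.mem_of_mem_erase h1)))
          (by
            intro hmem
            rcases Finset.mem_insert.1 hmem with h1 | h1
            · exact hoC (h1 ▸ hz)
            · rcases Finset.mem_insert.1 h1 with h2 | h2
              · exact hcC (h2 ▸ hz)
              · exact (Finset.mem_erase.1 (Finset.mem_of_mem_erase h2)).1 rfl)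
        have hρo : A ρ o = !A ρ z := hρ o (Finset.mem_insert_self _ _)
        have hρc : A ρ c = !A ρ z :=
          hρ c (Finset.mem_insert_of_mem (Finset.mem_insert_self _ _))
        have hρz' : ∀ z' ∈ (C.erase z).erase y, A ρ z' = !A ρ z := fun z' hz' =>
          hρ z' (Finset.mem_insert_of_mem (Finset.mem_insert_of_mem hz'))
        have hzc : A ρ z = !A ρ c := by rw [hρc]; cases A ρ z <;> rfl
        have hz'c : ∀ z' ∈ (C.erase z).erase y, A ρ z' = A ρ c := by
          intro z' hz'
          rw [hρz' z' hz', hρc]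
        rcases hclass ρ with hF | rfl | ⟨a, ha, rfl⟩ | ⟨a, ha, rfl⟩
        · rw [← hGF] at hF
          rcases Finset.mem_union.1 hF with hF2 | hF2
          · exfalso
            obtain ⟨x, hx, hxρ⟩ := Finset.mem_image.1 hF2
            rcases eq_or_ne x z with rfl | hxz
            · exact hzX hx
            · have e1 := (hf x hx).2.2.2 z (Finset.mem_erase.2 ⟨(Ne.symm hxz), hz⟩)
              rw [hxρ] at e1
              rw [e1] at hzc
              simp at hzc
          · exact ⟨ρ, hF2, hzc, hz'c⟩
        · exfalso
          obtain ⟨z'', hz''⟩ : (((C.erase z).erase y)).Nonempty := by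
            rw [← Finset.card_pos]
            have h1 : w - 1 ≤ (C.erase z).card := by rw [Finset.card_erase_of_mem hz, hCcard]
            have h2 : (C.erase z).card - 1 ≤ ((C.erase z).erase y).card :=
              Finset.pred_card_le_card_erase
            omega
          have e1 := hρz' z'' hz''
          have hz''C := Finset.mem_of_mem_erase (Finset.mem_of_mem_erase hz'')
          rw [hC0 z'' hz''C, hC0 z hz] at e1
          exact absurd e1 (by decide)
        · exfalso
          have e1 := (hr a ha).2.1
          rw [hρo] at e1
          rw [hρc] at e1
          simp at e1
        · exfalso
          rcases eq_or_ne a z with rfl | haz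
          · have e1 := hanti a ha hzX
            rw [hρo] at e1
            rw [hρc] at e1
            simp at e1
          · have e1 := (hu a ha).2.1 z (Finset.mem_erase.2 ⟨haz.symm, hz⟩)
            rw [e1] at hzc
            simp at hzc
      -- choose the killers and extract a star row
      have hkill' : ∀ y : Fin N, ∃ n, y ∈ C.erase z → (n ∈ needy ∧ A n z = !A n c ∧
          ∀ z' ∈ (C.erase z).erase y, A n z' = A n c) := by
        intro y
        by_cases hy : y ∈ C.erase z
        · obtain ⟨n, hn1, hn2, hn3⟩ := hkill y hy
          exact ⟨n, fun _ => ⟨hn1, hn2, hn3⟩⟩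
        · exact ⟨o, fun hy' => absurd hy' hy⟩
      choose nf hnf using hkill'
      by_cases hgood : ∃ y ∈ C.erase z, A (nf y) y = A (nf y) c
      · obtain ⟨y, hy, hgy⟩ := hgood
        obtain ⟨hn1, hn2, hn3⟩ := hnf y hy
        refine ⟨nf y, hn1, hn2, fun y' hy' => ?_⟩
        rcases eq_or_ne y' y with rfl | hyy
        · exact hgy
        · exact hn3 y' (Finset.mem_erase.2 ⟨hyy, hy'⟩)
      · exfalso
        push_neg at hgood
        have hbad : ∀ y ∈ C.erase z, A (nf y) y = !A (nf y) c := by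
          intro y hy
          have := hgood y hy
          revert this
          cases A (nf y) y <;> cases A (nf y) c <;> decide
        have hinj : Set.InjOn nf (C.erase z) := by
          intro y1 hy1 y2 hy2 heq
          by_contra hne
          have e1 := hbad y1 hy1
          have e2 := (hnf y2 hy2).2.2 y1 (Finset.mem_erase.2 ⟨hne, hy1⟩)
          rw [heq] at e1
          rw [e1] at e2
          simp at e2
        have hhim : h ∉ (C.erase z).image nf := by
          intro hmem
          obtain ⟨y, hy, hyh⟩ := Finset.mem_image.1 hmem
          obtain ⟨z'', hz'', hz''z, hz''y⟩ := hthird z hz y (Finset.mem_of_mem_erase hy)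
          have e1 := (hnf y hy).2.1
          have e2 := (hnf y hy).2.2 z''
            (Finset.mem_erase.2 ⟨hz''y, Finset.mem_erase.2 ⟨hz''z, hz''⟩⟩)
          rw [hyh] at e1 e2
          have e3 := hh z hz
          have e4 := hh z'' hz''
          rw [e3] at e1
          rw [e4] at e2
          rw [e2] at e1
          simp at e1
        have hhn : h ∈ needy := by
          have hhG := hGF ▸ hhF
          rcases Finset.mem_union.1 hhG with h1 | h1
          · obtain ⟨x, hx, hxh⟩ := Finset.mem_image.1 h1
            exact absurd hxh.symm (hhf x hx)
          · exact h1
        have hsub : insert h ((C.erase z).image nf) ⊆ needy := by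
          intro ρ hρ
          rcases Finset.mem_insert.1 hρ with rfl | hρ
          · exact hhn
          · obtain ⟨y, hy, hyρ⟩ := Finset.mem_image.1 hρ
            exact hyρ ▸ (hnf y hy).1
        have hcard : (insert h ((C.erase z).image nf)).card = w := by
          rw [Finset.card_insert_of_notMem hhim, Finset.card_image_of_injOn hinj,
            Finset.card_erase_of_mem hz, hCcard]
          omega
        have := Finset.card_le_card hsub
        rw [hcard] at this
        omega
    -- step 3 : the star rows over C \ X give too many needy rows
    have hZ : (C.filter (fun z => z ∉ X)).card = w - X.card := by
      have h1 := Finset.card_filter_add_card_filter_not (s := C)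
        (p := fun z => z ∈ X)
      have h2 : C.filter (fun z => z ∈ X) = X := by
        apply Finset.Subset.antisymm
        · exact fun z hz => (Finset.mem_filter.1 hz).2
        · exact fun z hz => Finset.mem_filter.2 ⟨hXC hz, hz⟩
      rw [h2] at h1
      omega
    have hstar' : ∀ z : Fin N, ∃ n, z ∈ C.filter (fun z => z ∉ X) → (n ∈ needy ∧
        A n z = !A n c ∧ ∀ y ∈ C.erase z, A n y = A n c) := by
      intro z
      by_cases hz : z ∈ C.filter (fun z => z ∉ X)
      · obtain ⟨n, hn1, hn2, hn3⟩ := hstar z (Finset.mem_of_mem_filter z hz)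
          (Finset.mem_filter.1 hz).2
        exact ⟨n, fun _ => ⟨hn1, hn2, hn3⟩⟩
      · exact ⟨o, fun hz' => absurd hz' hz⟩
    choose sf hsf using hstar'
    have hsinj : Set.InjOn sf (C.filter (fun z => z ∉ X)) := by
      intro z1 hz1 z2 hz2 heq
      by_contra hne
      have e1 := (hsf z1 hz1).2.1
      have e2 := (hsf z2 hz2).2.2 z1
        (Finset.mem_erase.2 ⟨hne, Finset.mem_of_mem_filter z1 hz1⟩)
      rw [heq] at e1
      rw [e1] at e2
      simp at e2
    have hhim : h ∉ (C.filter (fun z => z ∉ X)).image sf := by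
      intro hmem
      obtain ⟨z, hz, hzh⟩ := Finset.mem_image.1 hmem
      have hzC := Finset.mem_of_mem_filter z hz
      obtain ⟨z'', hz'', hz''z, -⟩ := hthird z hzC z hzC
      have e1 := (hsf z hz).2.1
      have e2 := (hsf z hz).2.2 z'' (Finset.mem_erase.2 ⟨hz''z, hz''⟩)
      rw [hzh] at e1 e2
      have e3 := hh z hzC
      have e4 := hh z'' hz''
      rw [e3] at e1
      rw [e4] at e2
      rw [e2] at e1
      simp at e1
    have hhn : h ∈ needy := by
      have hhG := hGF ▸ hhF
      rcases Finset.mem_union.1 hhG with h1 | h1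
      · obtain ⟨x, hx, hxh⟩ := Finset.mem_image.1 h1
        exact absurd hxh.symm (hhf x hx)
      · exact h1
    have hsub : insert h ((C.filter (fun z => z ∉ X)).image sf) ⊆ needy := by
      intro ρ hρ
      rcases Finset.mem_insert.1 hρ with rfl | hρ
      · exact hhn
      · obtain ⟨z, hz, hzρ⟩ := Finset.mem_image.1 hρ
        exact hzρ ▸ (hsf z hz).1
    have hcard : (insert h ((C.filter (fun z => z ∉ X)).image sf)).card = w - X.card + 1 := by
      rw [Finset.card_insert_of_notMem hhim, Finset.card_image_of_injOn hsinj, hZ]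
    have hXw : X.card ≤ w := by
      have := Finset.card_le_card hXC
      omega
    have hfin := Finset.card_le_card hsub
    rw [hcard] at hfin
    omega

  have hkw : F.card ≤ w - 1 := by omega
  have hXC : X ⊆ C := by rw [hXdef]; exact Finset.filter_subset _ _
  have hNF : needy ⊆ F := by rw [hNdef]; exact Finset.filter_subset _ _
  -- master contradiction device
  have hdone : ∀ D₀ : Finset (Fin N), D₀.card ≤ w → (∀ d ∈ D₀, d ≠ t) →
      (∀ ρ : Fin N, ∃ d ∈ D₀, A ρ d = A ρ t) → False := by
    intro D₀ hcard hnot hhit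
    have hsub : D₀ ⊆ Finset.univ.erase t := by
      intro d hd
      exact Finset.mem_erase.2 ⟨hnot d hd, Finset.mem_univ d⟩
    have hEcard : w ≤ (Finset.univ.erase t).card := by
      rw [Finset.card_erase_of_mem (Finset.mem_univ t), Finset.card_univ, Fintype.card_fin]
      omega
    obtain ⟨D, hD₀D, hDsub, hDcard⟩ := Finset.exists_subsuperset_card_eq hsub hcard hEcard
    obtain ⟨ρ, hρ⟩ := happ t D hDcard (fun ht => (Finset.mem_erase.1 (hDsub ht)).1 rfl)
    obtain ⟨d, hd, hdt⟩ := hhit ρ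
    have := hρ d (hD₀D hd)
    rw [hdt] at this
    simp at this
  -- the witness function for needy rows
  have hwitex : ∀ ρ : Fin N, ∃ γ, ρ ∈ needy → (γ ≠ t ∧ A ρ γ = A ρ t ∧
      ((∃ z ∈ C, A ρ z = A ρ t) → γ ∈ C)) := by
    intro ρ
    by_cases hρ : ρ ∈ needy
    · by_cases hzc : ∃ z ∈ C, A ρ z = A ρ t
      · obtain ⟨z, hz, hzt⟩ := hzc
        exact ⟨z, fun _ => ⟨fun h => htC (h ▸ hz), hzt, fun _ => hz⟩⟩
      · obtain ⟨γ, hγ1, hγ2⟩ := hnp ρ (hNF hρ)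
        exact ⟨γ, fun _ => ⟨hγ1, hγ2, fun hex => absurd hex hzc⟩⟩
    · exact ⟨o, fun h => absurd h hρ⟩
  choose wit hwit using hwitex
  have hwitT : ∀ ρ ∈ needy, wit ρ ≠ t := fun ρ hρ => (hwit ρ hρ).1
  have hwitE : ∀ ρ ∈ needy, A ρ (wit ρ) = A ρ t := fun ρ hρ => (hwit ρ hρ).2.1
  -- needy rows are the only problem rows besides row o, r-rows, u-rows
  have hFhit : ∀ ρ ∈ F, ρ ∉ needy → A ρ c = A ρ t ∨ A ρ o = A ρ t := by
    intro ρ hρF hρn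
    rw [hNdef] at hρn
    simp only [Finset.mem_filter, hρF, true_and, not_and] at hρn
    rcases Bool.eq_or_eq_not (A ρ t) (A ρ c) with h1 | h1
    · exact Or.inl h1.symm
    · by_cases h2 : A ρ c = A ρ o
      · have := hρn h2
        rw [h1] at this
        simp at this
      · right
        have : A ρ o = !A ρ c := by
          revert h2; cases A ρ o <;> cases A ρ c <;> decide
        rw [this, h1]
  -- hits for r-rows and u-rows via c and o
  have hrhit : ∀ z ∈ C, A (r z) c = A (r z) t ∨ A (r z) o = A (r z) t := by
    intro z hz
    rcases Bool.eq_or_eq_not (A (r z) t) (A (r z) c) with h1 | h1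
    · exact Or.inl h1.symm
    · right
      rw [(hr z hz).2.1, h1]
  have huhit : ∀ z ∈ C, z ∉ X →
      A (u z) c = A (u z) t ∨ A (u z) o = A (u z) t := by
    intro z hz hzX
    rcases Bool.eq_or_eq_not (A (u z) t) (A (u z) c) with h1 | h1
    · exact Or.inl h1.symm
    · right
      rw [hXdef] at hzX
      simp only [Finset.mem_filter, hz, true_and, not_and] at hzX
      by_cases h2 : A (u z) o = A (u z) c
      · exact absurd h1 (hzX h2)
      · have : A (u z) o = !A (u z) c := by
          revert h2; cases A (u z) o <;> cases A (u z) c <;> decide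
        rw [this, h1]
  -- main case split
  by_cases hcaseA : ((X ∪ needy.image wit) ∩ C).Nonempty
  · -- case (a)
    obtain ⟨γ₀, hγ₀⟩ := hcaseA
    have hγ₀D : γ₀ ∈ X ∪ needy.image wit := (Finset.mem_inter.1 hγ₀).1
    have hγ₀C : γ₀ ∈ C := (Finset.mem_inter.1 hγ₀).2
    apply hdone (insert c (insert o (X ∪ needy.image wit)))
    · have h1 := Finset.card_insert_le c (insert o (X ∪ needy.image wit))
      have h2 := Finset.card_insert_le o (X ∪ needy.image wit)
      have h3 := Finset.card_union_le X (needy.image wit)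
      have h4 := Finset.card_image_le (s := needy) (f := wit)
      omega
    · intro d hd
      rcases Finset.mem_insert.1 hd with rfl | hd
      · exact fun h => htnc h.symm
      · rcases Finset.mem_insert.1 hd with rfl | hd
        · exact fun h => htno h.symm
        · rcases Finset.mem_union.1 hd with hd | hd
          · exact fun h => htC (h ▸ hXC hd)
          · obtain ⟨ρ, hρ, hρd⟩ := Finset.mem_image.1 hd
            exact hρd ▸ hwitT ρ hρ
    · intro ρ
      rcases hclass ρ with hF | rfl | ⟨z, hz, rfl⟩ | ⟨z, hz, rfl⟩
      · by_cases hn : ρ ∈ needy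
        · exact ⟨wit ρ, Finset.mem_insert_of_mem (Finset.mem_insert_of_mem
            (Finset.mem_union_right _ (Finset.mem_image_of_mem wit hn))), hwitE ρ hn⟩
        · rcases hFhit ρ hF hn with h1 | h1
          · exact ⟨c, Finset.mem_insert_self _ _, h1⟩
          · exact ⟨o, Finset.mem_insert_of_mem (Finset.mem_insert_self _ _), h1⟩
      · exact ⟨γ₀, Finset.mem_insert_of_mem (Finset.mem_insert_of_mem hγ₀D),
          by rw [hC0 γ₀ hγ₀C, hto]⟩
      · rcases hrhit z hz with h1 | h1
        · exact ⟨c, Finset.mem_insert_self _ _, h1⟩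
        · exact ⟨o, Finset.mem_insert_of_mem (Finset.mem_insert_self _ _), h1⟩
      · by_cases hzX : z ∈ X
        · rcases Bool.eq_or_eq_not (A (u z) t) (A (u z) c) with h1 | h1
          · exact ⟨c, Finset.mem_insert_self _ _, h1.symm⟩
          · exact ⟨z, Finset.mem_insert_of_mem (Finset.mem_insert_of_mem
              (Finset.mem_union_left _ hzX)),
              by rw [(hu z hz).1, h1]⟩
        · rcases huhit z hz hzX with h1 | h1
          · exact ⟨c, Finset.mem_insert_self _ _, h1⟩
          · exact ⟨o, Finset.mem_insert_of_mem (Finset.mem_insert_self _ _), h1⟩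
  · -- case (b)
    have hXe : X = ∅ := by
      rw [Finset.eq_empty_iff_forall_notMem]
      intro x hx
      exact hcaseA ⟨x, Finset.mem_inter.2 ⟨Finset.mem_union_left _ hx, hXC hx⟩⟩
    have hXanti : ∀ z ∈ C, A (u z) t = !A (u z) c → A (u z) o = !A (u z) c := by
      intro z hz hodd
      by_contra hal
      have hal' : A (u z) o = A (u z) c := by
        revert hal; cases A (u z) o <;> cases A (u z) c <;> decide
      have : z ∈ X := hXdef ▸ Finset.mem_filter.2 ⟨hz, hal', hodd⟩
      rw [hXe] at this
      exact absurd this (Finset.notMem_empty z)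
    have hev : ∀ ρ ∈ needy, ∀ z ∈ C, A ρ z = A ρ c := by
      intro ρ hρ z hz
      have hwC : wit ρ ∉ C := by
        intro hmem
        exact hcaseA ⟨wit ρ, Finset.mem_inter.2 ⟨Finset.mem_union_right _
          (Finset.mem_image_of_mem wit hρ), hmem⟩⟩
      have hnoz : ¬∃ z' ∈ C, A ρ z' = A ρ t := fun hex => hwC ((hwit ρ hρ).2.2 hex)
      push_neg at hnoz
      have h1 := hnoz z hz
      have h2 : A ρ t = !A ρ c := (Finset.mem_filter.1 (hNdef ▸ hρ)).2.2
      rw [h2] at h1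
      revert h1; cases A ρ z <;> cases A ρ c <;> decide
    obtain ⟨z₀', hz₀'⟩ : C.Nonempty := by rw [← Finset.card_pos, hCcard]; omega
    by_cases hb1 : needy.card + 2 ≤ F.card
    · -- case (b1)
      apply hdone (insert c (insert o (insert z₀' (needy.image wit))))
      · have h1 := Finset.card_insert_le c (insert o (insert z₀' (needy.image wit)))
        have h2 := Finset.card_insert_le o (insert z₀' (needy.image wit))
        have h3 := Finset.card_insert_le z₀' (needy.image wit)
        have h4 := Finset.card_image_le (s := needy) (f := wit)
        omega
      · intro d hd
        rcases Finset.mem_insert.1 hd with rfl | hd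
        · exact fun h => htnc h.symm
        · rcases Finset.mem_insert.1 hd with rfl | hd
          · exact fun h => htno h.symm
          · rcases Finset.mem_insert.1 hd with rfl | hd
            · exact fun h => htC (h ▸ hz₀')
            · obtain ⟨ρ, hρ, hρd⟩ := Finset.mem_image.1 hd
              exact hρd ▸ hwitT ρ hρ
      · intro ρ
        rcases hclass ρ with hF | rfl | ⟨z, hz, rfl⟩ | ⟨z, hz, rfl⟩
        · by_cases hn : ρ ∈ needy
          · exact ⟨wit ρ, Finset.mem_insert_of_mem (Finset.mem_insert_of_mem
              (Finset.mem_insert_of_mem (Finset.mem_image_of_mem wit hn))), hwitE ρ hn⟩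
          · rcases hFhit ρ hF hn with h1 | h1
            · exact ⟨c, Finset.mem_insert_self _ _, h1⟩
            · exact ⟨o, Finset.mem_insert_of_mem (Finset.mem_insert_self _ _), h1⟩
        · exact ⟨z₀', Finset.mem_insert_of_mem (Finset.mem_insert_of_mem
            (Finset.mem_insert_self _ _)), by rw [hC0 z₀' hz₀', hto]⟩
        · rcases hrhit z hz with h1 | h1
          · exact ⟨c, Finset.mem_insert_self _ _, h1⟩
          · exact ⟨o, Finset.mem_insert_of_mem (Finset.mem_insert_self _ _), h1⟩
        · rcases huhit z hz (hXe ▸ Finset.notMem_empty z) with h1 | h1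
          · exact ⟨c, Finset.mem_insert_self _ _, h1⟩
          · exact ⟨o, Finset.mem_insert_of_mem (Finset.mem_insert_self _ _), h1⟩
    · -- case (b2)
      have hb2 : needy.card + 1 = F.card := by omega
      obtain ⟨φ, hφeq⟩ : ∃ φ, F \ needy = {φ} := by
        apply Finset.card_eq_one.1
        rw [Finset.card_sdiff_of_subset hNF]
        omega
      have hφF : φ ∈ F := (Finset.mem_sdiff.1 (hφeq ▸ Finset.mem_singleton_self φ)).1
      have hφn : φ ∉ needy := (Finset.mem_sdiff.1 (hφeq ▸ Finset.mem_singleton_self φ)).2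
      have hφonly : ∀ ρ ∈ F, ρ ∉ needy → ρ = φ := by
        intro ρ hρF hρn
        have : ρ ∈ F \ needy := Finset.mem_sdiff.2 ⟨hρF, hρn⟩
        rw [hφeq] at this
        exact Finset.mem_singleton.1 this
      -- P1 dichotomy
      have hP1 : ∀ z ∈ C, A (u z) o = !A (u z) c ∨
          (A φ o = !A φ c ∧ ∀ z' ∈ C.erase z, A φ z' = A φ c) := by
        intro z hz
        obtain ⟨ρ, hρ⟩ := happ o (insert c (C.erase z))
          (by
            rw [Finset.card_insert_of_notMem (fun hc' => hcC (Finset.mem_of_mem_erase hc')),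
              Finset.card_erase_of_mem hz, hCcard]
            omega)
          (by
            intro hmem
            rcases Finset.mem_insert.1 hmem with h1 | h1
            · exact hoc h1
            · exact hoC (Finset.mem_of_mem_erase h1))
        have hρc : A ρ c = !A ρ o := hρ c (Finset.mem_insert_self _ _)
        have hρz : ∀ z' ∈ C.erase z, A ρ z' = !A ρ o := fun z' hz' =>
          hρ z' (Finset.mem_insert_of_mem hz')
        rcases hclass ρ with hF | rfl | ⟨a, ha, rfl⟩ | ⟨a, ha, rfl⟩
        · by_cases hn : ρ ∈ needy
          · exfalso
            have e1 := (Finset.mem_filter.1 (hNdef ▸ hn)).2.1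
            rw [e1] at hρc
            simp at hρc
          · have hρφ := hφonly ρ hF hn
            subst hρφ
            right
            constructor
            · rw [hρc]; cases A ρ o <;> rfl
            · intro z' hz'
              rw [hρz z' hz', hρc]
        · exfalso
          rw [hAoo, hAoc] at hρc
          exact absurd hρc (by decide)
        · exfalso
          rcases eq_or_ne a z with rfl | haz
          · obtain ⟨z', hz', hz'a, -⟩ := hthird a ha a ha
            have e1 := (hr a ha).2.2.1 z' (Finset.mem_erase.2 ⟨hz'a, hz'⟩)
            have e2 := hρz z' (Finset.mem_erase.2 ⟨hz'a, hz'⟩)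
            have e3 := (hr a ha).2.1
            rw [e1] at e2
            rw [e3] at e2
            simp at e2
          · obtain ⟨z', hz', hz'a, hz'z⟩ := hthird a ha z hz
            have e1 := (hr a ha).2.2.1 z' (Finset.mem_erase.2 ⟨hz'a, hz'⟩)
            have e2 := hρz z' (Finset.mem_erase.2 ⟨hz'z, hz'⟩)
            have e3 := (hr a ha).2.1
            rw [e1] at e2
            rw [e3] at e2
            simp at e2
        · rcases eq_or_ne a z with rfl | haz
          · left
            rw [hρc]
            cases A (u a) o <;> rfl
          · exfalso
            have e1 := (hu a ha).1
            have e2 := hρz a (Finset.mem_erase.2 ⟨haz, ha⟩)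
            rw [e1] at e2
            rw [hρc] at e2
            simp at e2
      -- P2 dichotomy
      have hP2 : ∀ z ∈ C, ∀ y ∈ C.erase z, A (u z) o = A (u z) c ∨
          (A φ z = !A φ c ∧ A φ o = A φ c ∧
            ∀ z' ∈ (C.erase z).erase y, A φ z' = A φ c) := by
        intro z hz y hy
        obtain ⟨ρ, hρ⟩ := happ z (insert o (insert c ((C.erase z).erase y)))
          (by
            rw [Finset.card_insert_of_notMem, Finset.card_insert_of_notMem,
              Finset.card_erase_of_mem hy, Finset.card_erase_of_mem hz, hCcard]
            · omega
            · intro hc'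
              exact hcC (Finset.mem_of_mem_erase (Finset.mem_of_mem_erase hc'))
            · intro ho'
              rcases Finset.mem_insert.1 ho' with h1 | h1
              · exact hoc h1
              · exact hoC (Finset.mem_of_mem_erase (Finset.mem_of_mem_erase h1)))
          (by
            intro hmem
            rcases Finset.mem_insert.1 hmem with h1 | h1
            · exact hoC (h1 ▸ hz)
            · rcases Finset.mem_insert.1 h1 with h2 | h2
              · exact hcC (h2 ▸ hz)
              · exact (Finset.mem_erase.1 (Finset.mem_of_mem_erase h2)).1 rfl)
        have hρo : A ρ o = !A ρ z := hρ o (Finset.mem_insert_self _ _)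
        have hρc : A ρ c = !A ρ z :=
          hρ c (Finset.mem_insert_of_mem (Finset.mem_insert_self _ _))
        have hρz' : ∀ z' ∈ (C.erase z).erase y, A ρ z' = !A ρ z := fun z' hz' =>
          hρ z' (Finset.mem_insert_of_mem (Finset.mem_insert_of_mem hz'))
        rcases hclass ρ with hF | rfl | ⟨a, ha, rfl⟩ | ⟨a, ha, rfl⟩
        · by_cases hn : ρ ∈ needy
          · exfalso
            have e1 := hev ρ hn z hz
            rw [e1] at hρc
            simp at hρc
          · have hρφ := hφonly ρ hF hn
            subst hρφ
            right
            refine ⟨by rw [hρc]; cases A ρ z <;> rfl, by rw [hρo, hρc], ?_⟩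
            intro z' hz'
            rw [hρz' z' hz', hρc]
        · exfalso
          obtain ⟨z'', hz''⟩ : (((C.erase z).erase y)).Nonempty := by
            rw [← Finset.card_pos]
            have h1 : w - 1 ≤ (C.erase z).card := by
              rw [Finset.card_erase_of_mem hz, hCcard]
            have h2 : (C.erase z).card - 1 ≤ ((C.erase z).erase y).card :=
              Finset.pred_card_le_card_erase
            omega
          have e1 := hρz' z'' hz''
          have hz''C := Finset.mem_of_mem_erase (Finset.mem_of_mem_erase hz'')
          rw [hC0 z'' hz''C, hC0 z hz] at e1
          exact absurd e1 (by decide)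
        · exfalso
          have e1 := (hr a ha).2.1
          rw [hρo] at e1
          rw [hρc] at e1
          simp at e1
        · rcases eq_or_ne a z with rfl | haz
          · left
            have : A (u a) a = !A (u a) c := (hu a ha).1
            rw [this] at hρo
            rw [hρo]
            cases A (u a) c <;> rfl
          · exfalso
            have e1 := (hu a ha).2.1 z (Finset.mem_erase.2 ⟨haz.symm, hz⟩)
            rw [e1] at hρc
            simp at hρc
      -- all u-rows are aligned
      have halign : ∀ z ∈ C, A (u z) o = A (u z) c := by
        intro z hz
        by_contra hal
        have hanti : A (u z) o = !A (u z) c := by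
          revert hal; cases A (u z) o <;> cases A (u z) c <;> decide
        obtain ⟨y, hy⟩ : (C.erase z).Nonempty := by
          rw [← Finset.card_pos, Finset.card_erase_of_mem hz, hCcard]; omega
        rcases hP2 z hz y hy with h1 | ⟨hπ1, hπ2, hπ3⟩
        · rw [hanti] at h1; simp at h1
        · obtain ⟨z', hz'⟩ : ((C.erase z).erase y).Nonempty := by
            rw [← Finset.card_pos]
            have h1 : w - 1 ≤ (C.erase z).card := by
              rw [Finset.card_erase_of_mem hz, hCcard]
            have h2 : (C.erase z).card - 1 ≤ ((C.erase z).erase y).card :=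
              Finset.pred_card_le_card_erase
            omega
          have hφz' := hπ3 z' hz'
          have hz'C := Finset.mem_of_mem_erase (Finset.mem_of_mem_erase hz')
          rcases hP1 z' hz'C with h2 | ⟨hσ1, -⟩
          · obtain ⟨y'', hy''⟩ : (C.erase z').Nonempty := by
              rw [← Finset.card_pos, Finset.card_erase_of_mem hz'C, hCcard]; omega
            rcases hP2 z' hz'C y'' hy'' with h3 | ⟨hπ1', -, -⟩
            · rw [h2] at h3; simp at h3
            · rw [hφz'] at hπ1'; simp at hπ1'
          · rw [hπ2] at hσ1; simp at hσ1
      -- φ is a g-type row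
      have hφg : A φ o = !A φ c ∧ ∀ z ∈ C, A φ z = A φ c := by
        obtain ⟨z₁, hz₁⟩ : C.Nonempty := by rw [← Finset.card_pos, hCcard]; omega
        have h1 : A φ o = !A φ c := by
          rcases hP1 z₁ hz₁ with h1 | ⟨h1, -⟩
          · rw [halign z₁ hz₁] at h1; simp at h1
          · exact h1
        refine ⟨h1, fun z hz => ?_⟩
        obtain ⟨z'', hz'', hz''z, -⟩ := hthird z hz z hz
        rcases hP1 z'' hz'' with h2 | ⟨-, h2⟩
        · rw [halign z'' hz''] at h2; simp at h2
        · exact h2 z (Finset.mem_erase.2 ⟨hz''z.symm, hz⟩)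
      -- at most one r-row is bad
      have hXb : ∀ x ∈ C, ∀ y ∈ C, A (r x) t = A (r x) c → A (r y) t = A (r y) c →
          x = y := by
        intro x hx y hy hbx hby
        by_contra hne
        obtain ⟨ρ, hρ⟩ := happ c (insert o (insert t ((C.erase x).erase y)))
          (by
            rw [Finset.card_insert_of_notMem, Finset.card_insert_of_notMem,
              Finset.card_erase_of_mem, Finset.card_erase_of_mem hx, hCcard]
            · omega
            · exact Finset.mem_erase.2 ⟨Ne.symm hne, hy⟩
            · intro ht'
              exact htC (Finset.mem_of_mem_erase (Finset.mem_of_mem_erase ht'))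
            · intro ho'
              rcases Finset.mem_insert.1 ho' with h1 | h1
              · exact htno h1.symm
              · exact hoC (Finset.mem_of_mem_erase (Finset.mem_of_mem_erase h1)))
          (by
            intro hmem
            rcases Finset.mem_insert.1 hmem with h1 | h1
            · exact hoc h1.symm
            · rcases Finset.mem_insert.1 h1 with h2 | h2
              · exact htnc h2.symm
              · exact hcC (Finset.mem_of_mem_erase (Finset.mem_of_mem_erase h2)))
        have hρo : A ρ o = !A ρ c := hρ o (Finset.mem_insert_self _ _)
        have hρt : A ρ t = !A ρ c :=
          hρ t (Finset.mem_insert_of_mem (Finset.mem_insert_self _ _))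
        have hρz' : ∀ z' ∈ (C.erase x).erase y, A ρ z' = !A ρ c := fun z' hz' =>
          hρ z' (Finset.mem_insert_of_mem (Finset.mem_insert_of_mem hz'))
        rcases hclass ρ with hF | rfl | ⟨a, ha, rfl⟩ | ⟨a, ha, rfl⟩
        · by_cases hn : ρ ∈ needy
          · have e1 := (Finset.mem_filter.1 (hNdef ▸ hn)).2.1
            rw [e1] at hρo
            simp at hρo
          · have hρφ := hφonly ρ hF hn
            subst hρφ
            obtain ⟨z', hz'⟩ : ((C.erase x).erase y).Nonempty := by
              rw [← Finset.card_pos]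
              have h1 : w - 1 ≤ (C.erase x).card := by
                rw [Finset.card_erase_of_mem hx, hCcard]
              have h2 : (C.erase x).card - 1 ≤ ((C.erase x).erase y).card :=
                Finset.pred_card_le_card_erase
              omega
            have e1 := hφg.2 z'
              (Finset.mem_of_mem_erase (Finset.mem_of_mem_erase hz'))
            have e2 := hρz' z' hz'
            rw [e1] at e2
            simp at e2
        · rw [hAoo, hAoc] at hρo
          exact absurd hρo (by decide)
        · rcases eq_or_ne a x with rfl | hax
          · rw [hbx] at hρt
            simp at hρt
          · rcases eq_or_ne a y with rfl | hay
            · rw [hby] at hρt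
              simp at hρt
            · have e1 := (hr a ha).1
              have e2 := hρz' a (Finset.mem_erase.2 ⟨hay, Finset.mem_erase.2 ⟨hax, ha⟩⟩)
              rw [e1] at e2
              simp at e2
        · have e1 := halign a ha
          rw [hρo] at e1
          simp at e1
      -- the bad column if any
      have hz₀ : ∃ z₀ ∈ C, ∀ z ∈ C, A (r z) t = A (r z) c → z = z₀ := by
        by_cases hex : ∃ x ∈ C, A (r x) t = A (r x) c
        · obtain ⟨x, hx, hbx⟩ := hex
          exact ⟨x, hx, fun z hz hbz => hXb z hz x hx hbz hbx⟩
        · push_neg at hex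
          exact ⟨z₀', hz₀', fun z hz hbz => absurd hbz (hex z hz)⟩
      obtain ⟨z₀, hz₀C, hz₀b⟩ := hz₀
      -- final covering set
      apply hdone (insert o (insert z₀ (needy.image wit)))
      · have h1 := Finset.card_insert_le o (insert z₀ (needy.image wit))
        have h2 := Finset.card_insert_le z₀ (needy.image wit)
        have h3 := Finset.card_image_le (s := needy) (f := wit)
        omega
      · intro d hd
        rcases Finset.mem_insert.1 hd with rfl | hd
        · exact fun h => htno h.symm
        · rcases Finset.mem_insert.1 hd with rfl | hd
          · exact fun h => htC (h ▸ hz₀C)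
          · obtain ⟨ρ, hρ, hρd⟩ := Finset.mem_image.1 hd
            exact hρd ▸ hwitT ρ hρ
      · intro ρ
        rcases hclass ρ with hF | rfl | ⟨z, hz, rfl⟩ | ⟨z, hz, rfl⟩
        · by_cases hn : ρ ∈ needy
          · exact ⟨wit ρ, Finset.mem_insert_of_mem (Finset.mem_insert_of_mem
              (Finset.mem_image_of_mem wit hn)), hwitE ρ hn⟩
          · have hρφ := hφonly ρ hF hn
            subst hρφ
            rcases Bool.eq_or_eq_not (A ρ t) (A ρ c) with h1 | h1
            · exact ⟨z₀, Finset.mem_insert_of_mem (Finset.mem_insert_self _ _),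
                by rw [hφg.2 z₀ hz₀C, h1]⟩
            · exact ⟨o, Finset.mem_insert_self _ _, by rw [hφg.1, h1]⟩
        · exact ⟨z₀, Finset.mem_insert_of_mem (Finset.mem_insert_self _ _),
            by rw [hC0 z₀ hz₀C, hto]⟩
        · rcases Bool.eq_or_eq_not (A (r z) t) (A (r z) c) with h1 | h1
          · have hzz₀ := hz₀b z hz h1
            subst hzz₀
            exact ⟨z, Finset.mem_insert_of_mem (Finset.mem_insert_self _ _),
              by rw [(hr z hz).1, h1]⟩
          · exact ⟨o, Finset.mem_insert_self _ _, by rw [(hr z hz).2.1, h1]⟩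
        · rcases Bool.eq_or_eq_not (A (u z) t) (A (u z) c) with h1 | h1
          · exact ⟨o, Finset.mem_insert_self _ _, by rw [halign z hz, h1]⟩
          · exfalso
            have := hXanti z hz h1
            rw [halign z hz] at this
            simp at this

theorem stmt4 (w N : ℕ) (hw : 4 ≤ w) (hN1 : w + 1 ≤ N) (hN2 : N ≤ 3 * w)
    (A : Fin N → Fin N → Bool) (hA : IsSHF N N w A)
    (i₀ : ℕ) (hi₀ : i₀ ≤ w)
    (hrow : rowType A ⟨0, by omega⟩ = i₀)
    (hA11 : A ⟨0, by omega⟩ ⟨0, by omega⟩ = true) :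
    IsSHF (N - 1) (N - 1) w
      (fun r c => A ⟨r.val + 1, by have := r.isLt; omega⟩
                    ⟨c.val + 1, by have := c.isLt; omega⟩) := by
  intro c C hCcard hcC
  have hN0 : 0 < N := by omega
  set o : Fin N := ⟨0, by omega⟩ with ho
  set emb : Fin (N - 1) ↪ Fin N :=
    ⟨fun i => ⟨i.val + 1, by have := i.isLt; omega⟩, by
      intro a b hab
      have : a.val + 1 = b.val + 1 := congrArg Fin.val hab
      exact Fin.ext (by omega)⟩ with hemb
  have hones : (Finset.univ.filter fun γ => A o γ = true).card ≤ w := by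
    have : rowType A o = i₀ := hrow
    rw [rowType] at this
    omega
  have hkey := key w N hw hN2 A hA o hones hA11 (emb c) (C.map emb)
    (by
      intro hmem
      obtain ⟨x, hx, hxe⟩ := Finset.mem_map.1 hmem
      exact hcC ((emb.injective hxe) ▸ hx))
    (by rw [Finset.card_map, hCcard])
    (by
      intro heq
      have : (0 : ℕ) = c.val + 1 := congrArg Fin.val heq
      omega)
    (by
      intro hmem
      obtain ⟨x, hx, hxe⟩ := Finset.mem_map.1 hmem
      have : x.val + 1 = (0 : ℕ) := congrArg Fin.val hxe
      omega)
  obtain ⟨ρ, hρo, hρ⟩ := hkey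
  have hρpos : 0 < ρ.val := by
    rcases Nat.eq_zero_or_pos ρ.val with h0 | h
    · exact absurd (Fin.ext h0) hρo
    · exact h
  refine ⟨⟨ρ.val - 1, by have := ρ.isLt; omega⟩, fun x hx => ?_⟩
  have hρeq : (⟨(ρ.val - 1) + 1, by have := ρ.isLt; omega⟩ : Fin N) = ρ := by
    apply Fin.ext
    simp only [Fin.val_mk]
    omega
  show A ⟨(ρ.val - 1) + 1, _⟩ ⟨c.val + 1, _⟩ ≠ A ⟨(ρ.val - 1) + 1, _⟩ ⟨x.val + 1, _⟩
  rw [hρeq]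
  exact hρ (emb x) (Finset.mem_map_of_mem emb hx)
end

section
/- Let w and n be positive integers such that w+1 ≤ n. Then for every i with 1 ≤ i ≤ n−w−1, the inequality i·C(n−i, w) > (i+1)·C(n−i−1, w) holds if and only if (i+1)(w+1) > n+1. In particular, if n ≤ 2w, then C(n−1, w) > 2·C(n−2, w) > 3·C(n−3, w) > ⋯ > j·C(n−j, w) for all j ≤ n−w, i.e., the sequence j ↦ j·C(n−j, w) is strictly decreasing for 1 ≤ j ≤ n−w. -/
lemma key_ident (w m : ℕ) (hm : w + 1 ≤ m) :
    (m - w) * Nat.choose m w = m * Nat.choose (m - 1) w := by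
  have h1 := Nat.choose_succ_right_eq m w
  have h2 := Nat.add_one_mul_choose_eq (m - 1) w
  have hm1 : m - 1 + 1 = m := by omega
  rw [hm1] at h2
  calc (m - w) * Nat.choose m w = Nat.choose m w * (m - w) := by ring
    _ = Nat.choose m (w + 1) * (w + 1) := h1.symm
    _ = m * Nat.choose (m - 1) w := by rw [← h2]

lemma main_iff (w i t : ℕ) (hw : 1 ≤ w) (hi : 1 ≤ i) :
    i * Nat.choose (w + 1 + t) w > (i + 1) * Nat.choose (w + t) w ↔ i * w > 1 + t := by
  have hc : 0 < Nat.choose (w + t) w := Nat.choose_pos (by omega)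
  have hkey : (1 + t) * Nat.choose (w + 1 + t) w = (w + 1 + t) * Nat.choose (w + t) w := by
    have := key_ident w (w + 1 + t) (by omega)
    have e1 : w + 1 + t - w = 1 + t := by omega
    have e2 : w + 1 + t - 1 = w + t := by omega
    rw [e1, e2] at this
    exact this
  constructor
  · intro h
    have h2 : (i + 1) * Nat.choose (w + t) w * (1 + t) < i * Nat.choose (w + 1 + t) w * (1 + t) :=
      (Nat.mul_lt_mul_right (by omega : 0 < 1 + t)).mpr h
    have h3 : i * Nat.choose (w + 1 + t) w * (1 + t) = i * (w + 1 + t) * Nat.choose (w + t) w := by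
      calc i * Nat.choose (w + 1 + t) w * (1 + t)
          = i * ((1 + t) * Nat.choose (w + 1 + t) w) := by ring
        _ = i * ((w + 1 + t) * Nat.choose (w + t) w) := by rw [hkey]
        _ = i * (w + 1 + t) * Nat.choose (w + t) w := by ring
    rw [h3] at h2
    have h4 : (i + 1) * (1 + t) < i * (w + 1 + t) := by
      have := Nat.lt_of_mul_lt_mul_right (a := Nat.choose (w + t) w)
        (by calc (i + 1) * (1 + t) * Nat.choose (w + t) w
              = (i + 1) * Nat.choose (w + t) w * (1 + t) := by ring
            _ < i * (w + 1 + t) * Nat.choose (w + t) w := h2)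
      exact this
    nlinarith
  · intro h
    have h4 : (i + 1) * (1 + t) < i * (w + 1 + t) := by nlinarith
    have h2 : (i + 1) * Nat.choose (w + t) w * (1 + t) < i * (w + 1 + t) * Nat.choose (w + t) w := by
      calc (i + 1) * Nat.choose (w + t) w * (1 + t)
          = (i + 1) * (1 + t) * Nat.choose (w + t) w := by ring
        _ < i * (w + 1 + t) * Nat.choose (w + t) w :=
            (Nat.mul_lt_mul_right hc).mpr h4
    have h3 : i * (w + 1 + t) * Nat.choose (w + t) w = i * Nat.choose (w + 1 + t) w * (1 + t) := by
      calc i * (w + 1 + t) * Nat.choose (w + t) w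
          = i * ((w + 1 + t) * Nat.choose (w + t) w) := by ring
        _ = i * ((1 + t) * Nat.choose (w + 1 + t) w) := by rw [hkey]
        _ = i * Nat.choose (w + 1 + t) w * (1 + t) := by ring
    rw [h3] at h2
    exact Nat.lt_of_mul_lt_mul_right h2

theorem stmt8 (w n : ℕ) (hw : 1 ≤ w) (hn : w + 1 ≤ n) :
    (∀ i : ℕ, 1 ≤ i → i ≤ n - w - 1 →
      (i * Nat.choose (n - i) w > (i + 1) * Nat.choose (n - i - 1) w ↔
        (i + 1) * (w + 1) > n + 1)) ∧
    (n ≤ 2 * w → ∀ j : ℕ, 1 ≤ j → j < n - w →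
      j * Nat.choose (n - j) w > (j + 1) * Nat.choose (n - (j + 1)) w) := by
  have main : ∀ i : ℕ, 1 ≤ i → i ≤ n - w - 1 →
      (i * Nat.choose (n - i) w > (i + 1) * Nat.choose (n - i - 1) w ↔
        (i + 1) * (w + 1) > n + 1) := by
    intro i hi hile
    obtain ⟨t, ht⟩ : ∃ t, n = i + w + 1 + t := ⟨n - (i + w + 1), by omega⟩
    subst ht
    have e1 : i + w + 1 + t - i = w + 1 + t := by omega
    have e2 : w + 1 + t - 1 = w + t := by omega
    rw [e1, e2, main_iff w i t hw hi]
    constructor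
    · intro h; nlinarith
    · intro h; nlinarith
  refine ⟨main, fun hn2 j hj hjlt => ?_⟩
  have h1 : j ≤ n - w - 1 := by omega
  have h2 : n - (j + 1) = n - j - 1 := by omega
  rw [h2]
  rw [main j hj h1]
  nlinarith
end

section
/- Let A be a binary N × n matrix (entries in {0,1}), let w ≥ 1, and let r be a row of A of type i with i ≤ n/2. If i < w, then row r separates exactly i·C(n−i, w) column pairs ({c}, C) with |C| = w and c ∉ C. If i ≥ w, then row r separates exactly i·C(n−i, w) + C(i, w)·(n−i) such column pairs. -/
theorem stmt9 (N n w : ℕ) (hw : 1 ≤ w) (A : Fin N → Fin n → Bool) (r : Fin N)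
    (i : ℕ) (hi : rowType A r = i) (hstd : 2 * i ≤ n) :
    (i < w → sepCount A w r = i * Nat.choose (n - i) w) ∧
    (w ≤ i → sepCount A w r =
      i * Nat.choose (n - i) w + Nat.choose i w * (n - i)) := by
  classical
  set T := Finset.univ.filter (fun c => A r c = true) with hT
  set F := Finset.univ.filter (fun c => A r c = false) with hF
  have hTcard : T.card = i := hi
  have hFcard : F.card = n - i := by
    have hFeq : F = Finset.univ.filter (fun c => ¬ A r c = true) := by
      rw [hF]; apply Finset.filter_congr; intro x _; simp
    have hsum : T.card + F.card = n := by
      rw [hT, hFeq, Finset.card_filter_add_card_filter_not, Finset.card_fin]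
    omega
  have key : sepCount A w r = i * Nat.choose (n - i) w + Nat.choose i w * (n - i) := by
    unfold sepCount
    have hset : (Finset.univ.filter fun p : Fin n × Finset (Fin n) =>
        p.2.card = w ∧ p.1 ∉ p.2 ∧ ∀ x ∈ p.2, A r p.1 ≠ A r x)
        = T ×ˢ F.powersetCard w ∪ F ×ˢ T.powersetCard w := by
      ext ⟨c, C⟩
      simp only [Finset.mem_filter, Finset.mem_union, Finset.mem_product,
        Finset.mem_powersetCard, Finset.mem_univ, true_and, hT, hF]
      constructor
      · rintro ⟨hcard, hnot, hsep⟩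
        by_cases h1 : A r c = true
        · left
          refine ⟨h1, ⟨fun x hx => ?_, hcard⟩⟩
          have := hsep x hx
          simp only [Finset.mem_filter, Finset.mem_univ, true_and]
          rw [h1] at this
          simpa using this.symm
        · right
          refine ⟨by simpa using h1, ⟨fun x hx => ?_, hcard⟩⟩
          have := hsep x hx
          simp only [Finset.mem_filter, Finset.mem_univ, true_and]
          rw [Bool.not_eq_true] at h1
          rw [h1] at this
          simpa using this.symm
      · rintro (⟨hc, hsub, hcard⟩ | ⟨hc, hsub, hcard⟩)
        · refine ⟨hcard, fun hmem => ?_, fun x hx => ?_⟩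
          · have := hsub hmem
            simp only [Finset.mem_filter, Finset.mem_univ, true_and] at this
            rw [hc] at this; exact absurd this (by simp)
          · have := hsub hx
            simp only [Finset.mem_filter, Finset.mem_univ, true_and] at this
            rw [hc, this]; simp
        · refine ⟨hcard, fun hmem => ?_, fun x hx => ?_⟩
          · have := hsub hmem
            simp only [Finset.mem_filter, Finset.mem_univ, true_and] at this
            rw [hc] at this; exact absurd this (by simp)
          · have := hsub hx
            simp only [Finset.mem_filter, Finset.mem_univ, true_and] at this
            rw [hc, this]; simp
    have hdisj : Disjoint (T ×ˢ F.powersetCard w) (F ×ˢ T.powersetCard w) := by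
      rw [Finset.disjoint_left]
      rintro ⟨c, C⟩ hmem hmem'
      simp only [Finset.mem_product, hT, hF, Finset.mem_filter, Finset.mem_univ,
        true_and] at hmem hmem'
      rw [hmem.1] at hmem'
      exact absurd hmem'.1 (by simp)
    rw [hset, Finset.card_union_of_disjoint hdisj, Finset.card_product,
      Finset.card_product, Finset.card_powersetCard, Finset.card_powersetCard,
      hTcard, hFcard, Nat.mul_comm (n - i)]
  constructor
  · intro hlt
    rw [key, Nat.choose_eq_zero_of_lt hlt, zero_mul, add_zero]
  · intro _
    exact key
end

section
/- Let A be a binary N × n matrix (entries in {0,1}) and let w ≥ 1. Let r₁ be a row of A of type i and r₂ a row of A of type j, and suppose r₁ and r₂ have overlap equal to s. Then the number of column pairs ({c}, C) with |C| = w and c ∉ C that are separated by both r₁ and r₂ is exactly s·C(n−i−j+s, w) + (n−i−j+s)·C(s, w) + (i−s)·C(j−s, w) + (j−s)·C(i−s, w). -/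
private lemma stmt10_aux (N n w : ℕ) (hw : 1 ≤ w) (A : Fin N → Fin n → Bool)
    (r₁ r₂ : Fin N) (i j s : ℕ)
    (hi : (Finset.univ.filter fun c => A r₁ c = true).card = i)
    (hj : (Finset.univ.filter fun c => A r₂ c = true).card = j)
    (hs : (Finset.univ.filter fun c => A r₁ c = true ∧ A r₂ c = true).card = s) :
    (Finset.univ.filter fun p : Fin n × Finset (Fin n) =>
      p.2.card = w ∧ p.1 ∉ p.2 ∧
        (∀ x ∈ p.2, A r₁ p.1 ≠ A r₁ x) ∧ (∀ x ∈ p.2, A r₂ p.1 ≠ A r₂ x)).card =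
      s * Nat.choose (n + s - i - j) w + (n + s - i - j) * Nat.choose s w +
      (i - s) * Nat.choose (j - s) w + (j - s) * Nat.choose (i - s) w := by
  classical
  set T : Bool → Bool → Finset (Fin n) :=
    fun b₁ b₂ => Finset.univ.filter fun c => A r₁ c = b₁ ∧ A r₂ c = b₂ with hT
  have hne : ∀ (x y : Bool), x ≠ y ↔ y = !x := by decide
  have hfiber : ∀ c : Fin n,
      (Finset.univ.filter fun C : Finset (Fin n) =>
        C.card = w ∧ c ∉ C ∧ (∀ x ∈ C, A r₁ c ≠ A r₁ x) ∧ (∀ x ∈ C, A r₂ c ≠ A r₂ x))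
      = (T (!A r₁ c) (!A r₂ c)).powersetCard w := by
    intro c
    ext C
    simp only [Finset.mem_filter, Finset.mem_univ, true_and, Finset.mem_powersetCard,
      hT, Finset.subset_iff]
    constructor
    · rintro ⟨hcard, hnot, h1, h2⟩
      exact ⟨fun x hx => ⟨(hne _ _).1 (h1 x hx), (hne _ _).1 (h2 x hx)⟩, hcard⟩
    · rintro ⟨hsub, hcard⟩
      refine ⟨hcard, fun hc => ?_, fun x hx => (hne _ _).2 (hsub hx).1,
        fun x hx => (hne _ _).2 (hsub hx).2⟩
      have := (hsub hc).1
      simp at this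
  have h1 : (Finset.univ.filter fun p : Fin n × Finset (Fin n) =>
      p.2.card = w ∧ p.1 ∉ p.2 ∧
        (∀ x ∈ p.2, A r₁ p.1 ≠ A r₁ x) ∧ (∀ x ∈ p.2, A r₂ p.1 ≠ A r₂ x)).card =
      ∑ c : Fin n, ((T (!A r₁ c) (!A r₂ c)).card).choose w := by
    rw [Finset.card_eq_sum_card_fiberwise (f := Prod.fst) (t := Finset.univ) (by simp)]
    refine Finset.sum_congr rfl fun c _ => ?_
    rw [← Finset.card_powersetCard, ← hfiber c]
    have himg : (Finset.univ.filter fun p : Fin n × Finset (Fin n) =>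
        p.2.card = w ∧ p.1 ∉ p.2 ∧
          (∀ x ∈ p.2, A r₁ p.1 ≠ A r₁ x) ∧ (∀ x ∈ p.2, A r₂ p.1 ≠ A r₂ x)).filter
          (fun p => p.1 = c)
        = (Finset.univ.filter fun C : Finset (Fin n) =>
            C.card = w ∧ c ∉ C ∧ (∀ x ∈ C, A r₁ c ≠ A r₁ x) ∧
              (∀ x ∈ C, A r₂ c ≠ A r₂ x)).image (fun C => (c, C)) := by
      ext p
      simp only [Finset.mem_filter, Finset.mem_image, Finset.mem_univ, true_and]
      constructor
      · rintro ⟨hp, rfl⟩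
        exact ⟨p.2, hp, rfl⟩
      · rintro ⟨C, hC, rfl⟩
        exact ⟨hC, rfl⟩
    rw [himg, Finset.card_image_of_injective _ (fun x y h => by simpa using h)]
  rw [h1]
  -- cardinalities of the four classes
  have hsplit2 : ∀ b : Bool,
      (T b true).card + (T b false).card = (Finset.univ.filter fun c => A r₁ c = b).card := by
    intro b
    have h := Finset.card_filter_add_card_filter_not
      (s := Finset.univ.filter fun c => A r₁ c = b) (p := fun c => A r₂ c = true)
    rw [Finset.filter_filter, Finset.filter_filter] at h
    have e : (Finset.univ.filter fun a => A r₁ a = b ∧ ¬A r₂ a = true) = T b false := by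
      ext x; simp [hT]
    rw [← h, e]
  have hsplit1 : ∀ b : Bool,
      (T true b).card + (T false b).card = (Finset.univ.filter fun c => A r₂ c = b).card := by
    intro b
    have h := Finset.card_filter_add_card_filter_not
      (s := Finset.univ.filter fun c => A r₂ c = b) (p := fun c => A r₁ c = true)
    rw [Finset.filter_filter, Finset.filter_filter] at h
    have e1 : (Finset.univ.filter fun a => A r₂ a = b ∧ A r₁ a = true) = T true b := by
      ext x; simp [hT, and_comm]
    have e2 : (Finset.univ.filter fun a => A r₂ a = b ∧ ¬A r₁ a = true) = T false b := by
      ext x; simp [hT, and_comm]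
    rw [← h, e1, e2]
  have hr1 : (Finset.univ.filter fun c => A r₁ c = true).card +
      (Finset.univ.filter fun c => A r₁ c = false).card = n := by
    have h := Finset.card_filter_add_card_filter_not
      (s := (Finset.univ : Finset (Fin n))) (p := fun c => A r₁ c = true)
    simp only [Finset.card_univ, Fintype.card_fin, Bool.not_eq_true] at h
    exact h
  have hTTs : (T true true).card = s := hs
  have hI : (T true true).card + (T true false).card = i := by rw [hsplit2 true, hi]
  have hJ : (T true true).card + (T false true).card = j := by rw [hsplit1 true, hj]
  have hN : ((T true true).card + (T true false).card) +
      ((T false true).card + (T false false).card) = n := by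
    rw [hsplit2 true, hsplit2 false, hr1]
  -- split the sum over the four classes
  have h2 : ∀ (b₁ b₂ : Bool),
      ∑ c ∈ Finset.univ.filter (fun c => (A r₁ c, A r₂ c) = (b₁, b₂)),
        ((T (!A r₁ c) (!A r₂ c)).card).choose w
      = (T b₁ b₂).card * ((T (!b₁) (!b₂)).card).choose w := by
    intro b₁ b₂
    rw [Finset.sum_congr rfl (fun c hc => ?_), Finset.sum_const, smul_eq_mul]
    · congr 2
      ext x
      simp [hT, Prod.ext_iff]
    · simp only [Finset.mem_filter, Prod.mk.injEq] at hc
      rw [hc.2.1, hc.2.2]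
  have h3 : ∑ c : Fin n, ((T (!A r₁ c) (!A r₂ c)).card).choose w =
      ∑ b : Bool × Bool, (T b.1 b.2).card * ((T (!b.1) (!b.2)).card).choose w := by
    rw [← Finset.sum_fiberwise_of_maps_to (g := fun c => (A r₁ c, A r₂ c))
      (t := Finset.univ) (fun x _ => Finset.mem_univ _)]
    exact Finset.sum_congr rfl fun b _ => h2 b.1 b.2
  rw [h3, Fintype.sum_prod_type]
  simp only [Fintype.sum_bool, Bool.not_true, Bool.not_false]
  set a := (T true true).card
  set b := (T true false).card
  set cc := (T false true).card
  set d := (T false false).card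
  have hb : b = i - s := by omega
  have hcc : cc = j - s := by omega
  have hd : d = n + s - i - j := by omega
  rw [hTTs, hb, hcc, hd]
  ring

theorem stmt10 (N n w : ℕ) (hw : 1 ≤ w) (A : Fin N → Fin n → Bool)
    (r₁ r₂ : Fin N) (i j s : ℕ)
    (hi : rowType A r₁ = i) (hj : rowType A r₂ = j)
    (hs : overlap A r₁ r₂ = s) :
    sepCount2 A w r₁ r₂ =
      s * Nat.choose (n + s - i - j) w + (n + s - i - j) * Nat.choose s w +
      (i - s) * Nat.choose (j - s) w + (j - s) * Nat.choose (i - s) w :=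
  stmt10_aux N n w hw A r₁ r₂ i j s hi hj hs
end

section
/- Let A be an SHF(6; 5, 2, {1,3}) in standard form. Then at least five of the six rows of A are of type 1; that is, the rows of A can be permuted so that each of the first five rows contains exactly one entry equal to 1. -/
open Finset
def rt (v : Fin 5 → Bool) : ℕ := (univ.filter fun c => v c = true).card
def rS (v : Fin 5 → Bool) : Finset (Fin 5 × Finset (Fin 5)) :=
  univ.filter fun p => p.2.card = 3 ∧ p.1 ∉ p.2 ∧ ∀ x ∈ p.2, v p.1 ≠ v x
def Pset : Finset (Fin 5 × Finset (Fin 5)) := univ.filter fun p => p.2.card = 3 ∧ p.1 ∉ p.2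
lemma Pset_card : Pset.card = 20 := by decide
lemma rS_subset (v : Fin 5 → Bool) : rS v ⊆ Pset := by
  intro p hp; simp only [rS, Pset, mem_filter, mem_univ, true_and] at *; tauto
lemma rS_card_le : ∀ v : Fin 5 → Bool, 2 * rt v ≤ 5 → (rS v).card ≤ 4 := by decide
lemma rS_card_le2 : ∀ v : Fin 5 → Bool, 2 * rt v ≤ 5 → rt v ≠ 1 → (rS v).card ≤ 2 := by decide
lemma rt_two_of : ∀ v : Fin 5 → Bool, 2 * rt v ≤ 5 → rt v ≠ 1 → 1 ≤ (rS v).card → rt v = 2 := by decide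
lemma type1_sep : ∀ (w : Fin 5 → Bool) (c : Fin 5) (C : Finset (Fin 5)), rt w = 1 → w c = true →
    C.card = 3 → c ∉ C → (c, C) ∈ rS w := by decide
lemma type2_pair : ∀ (v : Fin 5 → Bool) (a : Fin 5), rt v = 2 → v a = true →
    (a, univ.filter fun c => v c = false) ∈ rS v := by decide
lemma rt_two_exists : ∀ v : Fin 5 → Bool, rt v = 2 → ∃ a b, a ≠ b ∧ v a = true ∧ v b = true := by decide
lemma rt_one_exists : ∀ v : Fin 5 → Bool, rt v = 1 → ∃ c, v c = true := by decide
lemma exists_C : ∀ c : Fin 5, ∃ C : Finset (Fin 5), C.card = 3 ∧ c ∉ C := by decide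

theorem stmt11 (A : Fin 6 → Fin 5 → Bool) (hA : IsSHF 6 5 3 A)
    (hstd : StandardForm A) :
    5 ≤ (Finset.univ.filter fun r : Fin 6 => rowType A r = 1).card := by
  classical
  by_contra hk
  push_neg at hk
  set T1 : Finset (Fin 6) := univ.filter fun r : Fin 6 => rowType A r = 1 with hT1
  have hk4 : T1.card ≤ 4 := by omega
  have hrt : ∀ r, rowType A r = rt (A r) := fun r => rfl
  have hstd' : ∀ r, 2 * rt (A r) ≤ 5 := fun r => by rw [← hrt]; exact hstd r
  set S : Fin 6 → Finset (Fin 5 × Finset (Fin 5)) := fun r => rS (A r) with hS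
  set cover : Fin 5 × Finset (Fin 5) → ℕ := fun p => (univ.filter fun r => p ∈ S r).card with hcover
  -- every pair is covered
  have hcov1 : ∀ p ∈ Pset, 1 ≤ cover p := by
    intro p hp
    simp only [Pset, mem_filter, mem_univ, true_and] at hp
    obtain ⟨r, hr⟩ := hA p.1 p.2 hp.1 hp.2
    have : r ∈ univ.filter fun r => p ∈ S r := by
      simp only [mem_filter, mem_univ, true_and, hS, rS]
      exact ⟨hp.1, hp.2, hr⟩
    exact card_pos.mpr ⟨r, this⟩
  -- double counting
  have hdouble : ∑ p ∈ Pset, cover p = ∑ r : Fin 6, (S r).card := by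
    simp only [hcover, card_filter]
    rw [Finset.sum_comm]
    refine Finset.sum_congr rfl fun r _ => ?_
    rw [← card_filter]
    congr 1
    rw [filter_mem_eq_inter, inter_eq_right.mpr (rS_subset _)]
  -- upper bound
  have hsplit : ∑ r : Fin 6, (S r).card =
      ∑ r ∈ T1, (S r).card + ∑ r ∈ univ.filter (fun r => ¬ rowType A r = 1), (S r).card := by
    rw [hT1, Finset.sum_filter_add_sum_filter_not]
  have hb1 : ∑ r ∈ T1, (S r).card ≤ 4 * T1.card := by
    calc ∑ r ∈ T1, (S r).card ≤ ∑ r ∈ T1, 4 :=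
      Finset.sum_le_sum fun r _ => rS_card_le _ (hstd' r)
    _ = 4 * T1.card := by rw [Finset.sum_const, smul_eq_mul, mul_comm]
  have hcardsplit : T1.card + (univ.filter (fun r => ¬ rowType A r = 1)).card = 6 := by
    rw [hT1]; rw [Finset.card_filter_add_card_filter_not]; simp
  have hb2 : ∑ r ∈ univ.filter (fun r => ¬ rowType A r = 1), (S r).card ≤
      2 * (univ.filter (fun r => ¬ rowType A r = 1)).card := by
    calc ∑ r ∈ univ.filter (fun r => ¬ rowType A r = 1), (S r).card
        ≤ ∑ r ∈ univ.filter (fun r => ¬ rowType A r = 1), 2 := by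
          refine Finset.sum_le_sum fun r hr => ?_
          simp only [mem_filter] at hr
          exact rS_card_le2 _ (hstd' r) (by rw [← hrt]; exact hr.2)
    _ = _ := by rw [Finset.sum_const, smul_eq_mul, mul_comm]
  -- lower bound
  have hlow : 20 ≤ ∑ p ∈ Pset, cover p := by
    calc (20 : ℕ) = ∑ p ∈ Pset, 1 := by rw [Finset.sum_const, smul_eq_mul, mul_one, Pset_card]
    _ ≤ ∑ p ∈ Pset, cover p := Finset.sum_le_sum hcov1
  have hsum20 : ∑ p ∈ Pset, cover p = 20 := by omega
  have hT1card : T1.card = 4 := by omega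
  -- each pair covered exactly once
  have hcovle : ∀ p ∈ Pset, cover p = 1 := by
    intro p hp
    by_contra h
    have h2 : 1 < cover p := lt_of_le_of_ne (hcov1 p hp) (Ne.symm h)
    have : ∑ q ∈ Pset, 1 < ∑ q ∈ Pset, cover q :=
      Finset.sum_lt_sum hcov1 ⟨p, hp, h2⟩
    rw [Finset.sum_const, smul_eq_mul, mul_one, Pset_card, hsum20] at this
    omega
  have huniq : ∀ p ∈ Pset, ∀ r1 r2 : Fin 6, p ∈ S r1 → p ∈ S r2 → r1 = r2 := by
    intro p hp r1 r2 h1 h2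
    have hc := hcovle p hp
    rw [hcover] at hc
    obtain ⟨r0, hr0⟩ := Finset.card_eq_one.mp hc
    have e1 : r1 ∈ univ.filter fun r => p ∈ S r := by simp [h1]
    have e2 : r2 ∈ univ.filter fun r => p ∈ S r := by simp [h2]
    rw [hr0, Finset.mem_singleton] at e1 e2
    rw [e1, e2]
  -- there is a type-2 row
  have hrest4 : 4 ≤ ∑ r ∈ univ.filter (fun r => ¬ rowType A r = 1), (S r).card := by omega
  have hr5 : ∃ r5, ¬ rowType A r5 = 1 ∧ 1 ≤ (S r5).card := by
    by_contra h
    push_neg at h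
    have : ∑ r ∈ univ.filter (fun r => ¬ rowType A r = 1), (S r).card = 0 := by
      refine Finset.sum_eq_zero fun r hr => ?_
      simp only [mem_filter] at hr
      have := h r hr.2
      omega
    omega
  obtain ⟨r5, hr5ne, hr5pos⟩ := hr5
  have hrt5 : rt (A r5) = 2 := rt_two_of _ (hstd' r5) (by rw [← hrt]; exact hr5ne) hr5pos
  obtain ⟨a, b, hab, ha, hb⟩ := rt_two_exists _ hrt5
  have hpa : (a, univ.filter fun c => A r5 c = false) ∈ S r5 := type2_pair _ _ hrt5 ha
  have hpb : (b, univ.filter fun c => A r5 c = false) ∈ S r5 := type2_pair _ _ hrt5 hb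
  -- the four type-1 rows map injectively to columns avoiding a and b
  set f : Fin 6 → Fin 5 := fun r =>
    if h : ∃ c, A r c = true then h.choose else a with hf
  have hfspec : ∀ r ∈ T1, A r (f r) = true := by
    intro r hr
    simp only [hT1, mem_filter] at hr
    have he : ∃ c, A r c = true := rt_one_exists _ (by rw [← hrt]; exact hr.2)
    simp only [hf, dif_pos he]
    exact he.choose_spec
  have hne5 : ∀ r ∈ T1, r ≠ r5 := by
    intro r hr
    simp only [hT1, mem_filter] at hr
    intro h; rw [h, hrt, hrt5] at hr; omega
  set K : Finset (Fin 5) := univ.filter (fun c => A r5 c = false) with hK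
  have hKP := rS_subset _ hpa
  simp only [Pset, mem_filter, mem_univ, true_and] at hKP
  have hKcard : K.card = 3 := hKP.1
  have haK : a ∉ K := hKP.2
  have hbK : b ∉ K := by
    have := rS_subset _ hpb
    simp only [Pset, mem_filter, mem_univ, true_and] at this
    exact this.2
  have hrt1 : ∀ s ∈ T1, rt (A s) = 1 := by
    intro s hs; simp only [hT1, mem_filter] at hs; rw [← hrt]; exact hs.2
  have hmaps : ∀ r ∈ T1, f r ∈ ({a, b}ᶜ : Finset (Fin 5)) := by
    intro r hr
    simp only [mem_compl, mem_insert, mem_singleton]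
    push_neg
    constructor
    · intro h
      have hAra : A r a = true := by rw [← h]; exact hfspec r hr
      have hp : (a, K) ∈ S r := type1_sep (A r) a K (hrt1 r hr) hAra hKcard haK
      exact hne5 r hr (huniq _ (rS_subset _ hpa) _ _ hp hpa)
    · intro h
      have hArb : A r b = true := by rw [← h]; exact hfspec r hr
      have hp : (b, K) ∈ S r := type1_sep (A r) b K (hrt1 r hr) hArb hKcard hbK
      exact hne5 r hr (huniq _ (rS_subset _ hpb) _ _ hp hpb)
  have htarget : ({a, b}ᶜ : Finset (Fin 5)).card = 3 := by
    rw [card_compl, card_insert_of_notMem (by simpa using hab), card_singleton]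
    simp
  have hlt : ({a, b}ᶜ : Finset (Fin 5)).card < T1.card := by omega
  obtain ⟨r, hr, r', hr', hrr', hfeq⟩ :=
    Finset.exists_ne_map_eq_of_card_lt_of_maps_to hlt hmaps
  obtain ⟨C, hC3, hCc⟩ := exists_C (f r)
  have h1 : (f r, C) ∈ S r := type1_sep _ _ _ (hrt1 r hr) (hfspec r hr) hC3 hCc
  have hfr' : A r' (f r) = true := by rw [hfeq]; exact hfspec r' hr'
  have h2 : (f r, C) ∈ S r' := type1_sep _ _ _ (hrt1 r' hr') hfr' hC3 hCc
  exact hrr' (huniq _ (rS_subset _ h1) _ _ h1 h2)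
end

section
/- Let A be an SHF(7; 6, 2, {1,3}) in standard form. Then at least six of the seven rows of A are of type 1; that is, the rows of A can be permuted so that each of the first six rows contains exactly one entry equal to 1. -/
set_option maxRecDepth 10000 in
lemma bad_lb : ∀ (c : Fin 6) (Pc : Finset (Fin 6)), c ∉ Pc → Pc.card ≤ 3 →
    Nat.choose (5 - Pc.card) 2 ≤ ((Finset.univ : Finset (Finset (Fin 6))).filter
      fun C => C.card = 3 ∧ c ∉ C ∧ Pc ⊆ C).card := by decide

lemma stmt12_aux (A : Fin 7 → Fin 6 → Bool)
    (hA : ∀ (c : Fin 6) (C : Finset (Fin 6)), C.card = 3 → c ∉ C →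
      ∃ r : Fin 7, ∀ x ∈ C, A r c ≠ A r x)
    (hstd : ∀ r : Fin 7, 2 * (Finset.univ.filter fun c => A r c = true).card ≤ 6) :
    6 ≤ (Finset.univ.filter fun r : Fin 7 =>
      (Finset.univ.filter fun c => A r c = true).card = 1).card := by
  classical
  by_contra hcon
  push_neg at hcon
  set rt : Fin 7 → ℕ := fun r => (Finset.univ.filter fun c => A r c = true).card with hrt
  set T1 := Finset.univ.filter fun r : Fin 7 => rt r = 1 with hT1
  set T2 := Finset.univ.filter fun r : Fin 7 => rt r = 2 with hT2
  set T3 := Finset.univ.filter fun r : Fin 7 => rt r = 3 with hT3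
  have hle3 : ∀ r, rt r ≤ 3 := fun r => by
    have := hstd r
    have h : rt r = (Finset.univ.filter fun c => A r c = true).card := rfl
    omega
  have h7 : T1.card + T2.card + T3.card ≤ 7 := by
    have h12 : Disjoint T1 T2 := by
      rw [Finset.disjoint_left]
      intro a h1 h2
      simp only [hT1, hT2, Finset.mem_filter, Finset.mem_univ, true_and] at h1 h2
      omega
    have h123 : Disjoint (T1 ∪ T2) T3 := by
      rw [Finset.disjoint_left]
      intro a h1 h2
      simp only [hT1, hT2, hT3, Finset.mem_union, Finset.mem_filter,
        Finset.mem_univ, true_and] at h1 h2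
      omega
    calc T1.card + T2.card + T3.card = ((T1 ∪ T2) ∪ T3).card := by
          rw [Finset.card_union_of_disjoint h123, Finset.card_union_of_disjoint h12]
      _ ≤ (Finset.univ : Finset (Fin 7)).card := Finset.card_le_univ _
      _ = 7 := by simp
  set S := T1.biUnion (fun r => Finset.univ.filter fun c => A r c = true) with hS
  have hScard : S.card ≤ T1.card := by
    calc S.card ≤ ∑ r ∈ T1, (Finset.univ.filter fun c => A r c = true).card :=
          Finset.card_biUnion_le
      _ ≤ T1.card • 1 := Finset.sum_le_card_nsmul _ _ 1 (by
          intro r hr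
          simp only [hT1, Finset.mem_filter, Finset.mem_univ, true_and] at hr
          have h : rt r = (Finset.univ.filter fun c => A r c = true).card := rfl
          omega)
      _ = T1.card := by simp
  set U := (Finset.univ : Finset (Fin 6)) \ S with hU
  have hUcard : U.card = 6 - S.card := by
    rw [hU, Finset.card_sdiff_of_subset (Finset.subset_univ S)]
    simp
  have hU1 : ∀ c ∈ U, ∀ r, rt r = 1 → A r c = false := by
    intro c hc r h1
    by_contra hne
    have hct : A r c = true := by
      cases h : A r c
      · exact absurd h hne
      · rfl
    have : c ∈ S := by
      rw [hS, Finset.mem_biUnion]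
      exact ⟨r, by simp [hT1, h1], by simp [hct]⟩
    rw [hU, Finset.mem_sdiff] at hc
    exact hc.2 this
  set P : Fin 6 → Finset (Fin 6) := fun c => Finset.univ.filter
    (fun b => b ≠ c ∧ ∃ r, rt r = 2 ∧ A r c = true ∧ A r b = true) with hPdef
  have hPnot : ∀ c : Fin 6, c ∉ P c := by
    intro c hc
    simp only [hPdef, Finset.mem_filter] at hc
    exact hc.2.1 rfl
  -- key classification
  have hclass : ∀ c ∈ U, ∀ C : Finset (Fin 6), C.card = 3 → c ∉ C → P c ⊆ C →
      ∃ r, rt r = 3 ∧ C = Finset.univ.filter fun x => A r x ≠ A r c := by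
    intro c hc C hC3 hcC hPC
    obtain ⟨r, hr⟩ := hA c C hC3 hcC
    refine ⟨r, ?_⟩
    cases hac : A r c with
    | false =>
      have hsub : C ⊆ Finset.univ.filter (fun x => A r x = true) := by
        intro x hx
        simp only [Finset.mem_filter, Finset.mem_univ, true_and]
        have h := hr x hx
        rw [hac] at h
        cases hax : A r x
        · exact absurd hax.symm h
        · rfl
      have h3 : rt r = 3 := le_antisymm (hle3 r)
        (by rw [← hC3]; exact Finset.card_le_card hsub)
      have hCeq : C = Finset.univ.filter (fun x => A r x = true) :=
        Finset.eq_of_subset_of_card_le hsub (by rw [hC3]; exact le_of_eq h3)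
      refine ⟨h3, ?_⟩
      rw [hCeq]
      apply Finset.filter_congr
      intro x _
      simp [hac]
    | true =>
      have hzero : ∀ x ∈ C, A r x = false := by
        intro x hx
        have h := hr x hx
        rw [hac] at h
        cases hax : A r x
        · rfl
        · exact absurd hax.symm h
      have hcone : c ∈ Finset.univ.filter (fun x => A r x = true) := by
        simp [hac]
      have h1le : 1 ≤ rt r := Finset.card_pos.mpr ⟨c, hcone⟩
      have hcases : rt r = 1 ∨ rt r = 2 ∨ rt r = 3 := by
        have := hle3 r; omega
      rcases hcases with h1 | h2 | h3
      · rw [hU1 c hc r h1] at hac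
        exact absurd hac (by simp)
      · -- rowType 2 : partner in P c but P c ⊆ C gives contradiction
        exfalso
        have h2' : (Finset.univ.filter fun x => A r x = true).card = 2 := h2
        obtain ⟨x, y, hxy, hset⟩ := Finset.card_eq_two.mp h2'
        rw [hset] at hcone
        have hxmem : x ∈ Finset.univ.filter (fun x => A r x = true) := by
          rw [hset]; simp
        have hymem : y ∈ Finset.univ.filter (fun x => A r x = true) := by
          rw [hset]; simp
        simp only [Finset.mem_filter, Finset.mem_univ, true_and] at hxmem hymem
        rcases Finset.mem_insert.mp hcone with hcx | hcy
        · -- c = x, partner y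
          have hyP : y ∈ P c := by
            simp only [hPdef, Finset.mem_filter, Finset.mem_univ, true_and]
            exact ⟨by rw [hcx]; exact fun h => hxy h.symm, r, h2, by rw [hcx]; exact hxmem, hymem⟩
          have := hzero y (hPC hyP)
          rw [hymem] at this
          exact absurd this (by simp)
        · have hcy' : c = y := Finset.mem_singleton.mp hcy
          have hxP : x ∈ P c := by
            simp only [hPdef, Finset.mem_filter, Finset.mem_univ, true_and]
            exact ⟨by rw [hcy']; exact hxy, r, h2, by rw [hcy']; exact hymem, hxmem⟩
          have := hzero x (hPC hxP)
          rw [hxmem] at this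
          exact absurd this (by simp)
      · refine ⟨h3, ?_⟩
        have hzc : (Finset.univ.filter fun x => A r x = false).card = 3 := by
          have hpn := Finset.card_filter_add_card_filter_not
            (s := (Finset.univ : Finset (Fin 6))) (p := fun x => A r x = true)
          have he : (Finset.univ.filter fun x => ¬ A r x = true)
              = (Finset.univ.filter fun x => A r x = false) := by
            apply Finset.filter_congr
            intro x _
            simp
          rw [he] at hpn
          have h3' : (Finset.univ.filter fun x => A r x = true).card = 3 := h3
          simp only [Finset.card_univ, Fintype.card_fin] at hpn
          omega
        have hsub : C ⊆ Finset.univ.filter (fun x => A r x = false) := by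
          intro x hx
          simp only [Finset.mem_filter, Finset.mem_univ, true_and]
          exact hzero x hx
        have hCeq : C = Finset.univ.filter (fun x => A r x = false) :=
          Finset.eq_of_subset_of_card_le hsub (by rw [hC3, hzc])
        rw [hCeq]
        apply Finset.filter_congr
        intro x _
        simp [hac]
  -- bad triples ≤ T3.card
  have hBle : ∀ c ∈ U, ((Finset.univ : Finset (Finset (Fin 6))).filter
      fun C => C.card = 3 ∧ c ∉ C ∧ P c ⊆ C).card ≤ T3.card := by
    intro c hc
    have hex : ∀ C : Finset (Fin 6),
        ∃ r, (C.card = 3 ∧ c ∉ C ∧ P c ⊆ C) →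
          rt r = 3 ∧ C = Finset.univ.filter fun x => A r x ≠ A r c := by
      intro C
      by_cases hCB : C.card = 3 ∧ c ∉ C ∧ P c ⊆ C
      · obtain ⟨r, hr⟩ := hclass c hc C hCB.1 hCB.2.1 hCB.2.2
        exact ⟨r, fun _ => hr⟩
      · exact ⟨0, fun h => absurd h hCB⟩
    choose f hf using hex
    apply Finset.card_le_card_of_injOn f
    · intro C hCB
      simp only [Finset.mem_coe, Finset.mem_filter, Finset.mem_univ, true_and] at hCB
      simp only [hT3, Finset.mem_coe, Finset.mem_filter, Finset.mem_univ, true_and]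
      exact (hf C hCB).1
    · intro C hCB C' hC'B heq
      simp only [Finset.coe_filter, Finset.mem_univ, true_and, Set.mem_setOf_eq] at hCB hC'B
      rw [(hf C hCB).2, heq, ← (hf C' hC'B).2]
  -- |P c| ≤ T2.card
  have hPle : ∀ c : Fin 6, (P c).card ≤ T2.card := by
    intro c
    have hex : ∀ b : Fin 6, ∃ r, b ∈ P c → rt r = 2 ∧ A r c = true ∧ A r b = true := by
      intro b
      by_cases hb : b ∈ P c
      · simp only [hPdef, Finset.mem_filter, Finset.mem_univ, true_and] at hb
        obtain ⟨_, r, hr⟩ := hb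
        exact ⟨r, fun _ => hr⟩
      · exact ⟨0, fun h => absurd h hb⟩
    choose f hf using hex
    apply Finset.card_le_card_of_injOn f
    · intro b hb
      simp only [hT2, Finset.mem_coe, Finset.mem_filter, Finset.mem_univ, true_and]
      exact (hf b (by simpa using hb)).1
    · intro b hb b' hb' heq
      rw [Finset.mem_coe] at hb hb'
      by_contra hne
      obtain ⟨h2, hfc, hfb⟩ := hf b hb
      obtain ⟨_, _, hfb'⟩ := hf b' hb'
      rw [← heq] at hfb'
      have hbc : b ≠ c := by
        have := Finset.mem_filter.mp hb
        exact this.2.1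
      have hb'c : b' ≠ c := by
        have := Finset.mem_filter.mp hb'
        exact this.2.1
      have hsub : ({c, b, b'} : Finset (Fin 6)) ⊆
          Finset.univ.filter (fun x => A (f b) x = true) := by
        intro x hx
        simp only [Finset.mem_insert, Finset.mem_singleton] at hx
        simp only [Finset.mem_filter, Finset.mem_univ, true_and]
        rcases hx with h | h | h
        · rw [h]; exact hfc
        · rw [h]; exact hfb
        · rw [h]; exact hfb'
      have hcard : ({c, b, b'} : Finset (Fin 6)).card = 3 := by
        rw [Finset.card_insert_of_notMem (by simp [Ne.symm hbc, Ne.symm hb'c]),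
          Finset.card_insert_of_notMem (by simp [hne]), Finset.card_singleton]
      have hle := Finset.card_le_card hsub
      rw [hcard] at hle
      have hh : (Finset.univ.filter fun x => A (f b) x = true).card = 2 := h2
      omega
  -- sum over U
  set Q := U.sigma P with hQdef
  have hQsum : Q.card = ∑ c ∈ U, (P c).card := Finset.card_sigma _ _
  have hQle : Q.card ≤ 2 * T2.card := by
    have hex : ∀ p : Σ _ : Fin 6, Fin 6, ∃ r, p ∈ Q →
        rt r = 2 ∧ A r p.1 = true ∧ A r p.2 = true ∧ p.2 ≠ p.1 := by
      intro p
      by_cases hp : p ∈ Q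
      · have hp' := Finset.mem_sigma.mp hp
        have hmem := hp'.2
        simp only [hPdef, Finset.mem_filter, Finset.mem_univ, true_and] at hmem
        obtain ⟨hne, r, h2, hc, hb⟩ := hmem
        exact ⟨r, fun _ => ⟨h2, hc, hb, hne⟩⟩
      · exact ⟨0, fun h => absurd h hp⟩
    choose f hf using hex
    have hsub : Q ⊆ T2.biUnion (fun r => Q.filter fun p => f p = r) := by
      intro p hp
      rw [Finset.mem_biUnion]
      refine ⟨f p, ?_, Finset.mem_filter.mpr ⟨hp, rfl⟩⟩
      simp only [hT2, Finset.mem_filter, Finset.mem_univ, true_and]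
      exact (hf p hp).1
    calc Q.card ≤ (T2.biUnion (fun r => Q.filter fun p => f p = r)).card :=
          Finset.card_le_card hsub
      _ ≤ ∑ r ∈ T2, (Q.filter fun p => f p = r).card := Finset.card_biUnion_le
      _ ≤ T2.card • 2 := by
          apply Finset.sum_le_card_nsmul
          intro r hr
          simp only [hT2, Finset.mem_filter, Finset.mem_univ, true_and] at hr
          have h2' : (Finset.univ.filter fun x => A r x = true).card = 2 := hr
          obtain ⟨x, y, hxy, hset⟩ := Finset.card_eq_two.mp h2'
          have hfib : (Q.filter fun p => f p = r) ⊆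
              ({⟨x, y⟩, ⟨y, x⟩} : Finset (Σ _ : Fin 6, Fin 6)) := by
            intro p hp
            obtain ⟨hpQ, hpf⟩ := Finset.mem_filter.mp hp
            obtain ⟨h2, ha, hb, hne⟩ := hf p hpQ
            rw [hpf] at ha hb
            have ha' : p.1 ∈ ({x, y} : Finset (Fin 6)) := by
              rw [← hset]; simp [ha]
            have hb' : p.2 ∈ ({x, y} : Finset (Fin 6)) := by
              rw [← hset]; simp [hb]
            simp only [Finset.mem_insert, Finset.mem_singleton] at ha' hb' ⊢
            rcases p with ⟨p1, p2⟩
            simp only at ha' hb' hne ⊢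
            rcases ha' with h1 | h1 <;> rcases hb' with h2 | h2
            · exact absurd (h2.trans h1.symm) hne
            · left; rw [h1, h2]
            · right; rw [h1, h2]
            · exact absurd (h2.trans h1.symm) hne
          calc (Q.filter fun p => f p = r).card ≤ _ := Finset.card_le_card hfib
            _ ≤ 2 := (Finset.card_insert_le _ _).trans (by simp)
      _ = 2 * T2.card := by rw [smul_eq_mul, mul_comm]
  -- endgame
  have hUne : U.Nonempty := by
    rw [← Finset.card_pos]
    omega
  obtain ⟨c0, hc0, hmin⟩ := Finset.exists_min_image U (fun c => (P c).card) hUne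
  have hkey : (P c0).card ≤ 3 → Nat.choose (5 - (P c0).card) 2 ≤ T3.card :=
    fun h3 => le_trans (bad_lb c0 (P c0) (hPnot c0) h3) (hBle c0 hc0)
  have hm2 : (P c0).card ≤ T2.card := hPle c0
  have hmul : U.card * (P c0).card ≤ 2 * T2.card := by
    have hs := Finset.card_nsmul_le_sum U (fun c => (P c).card) ((P c0).card)
      (fun c hc => hmin c hc)
    rw [smul_eq_mul] at hs
    omega
  have hm7 : (P c0).card ≤ 7 := le_trans hm2 (by omega)
  have hkey' : Nat.choose (5 - (P c0).card) 2 ≤ T3.card ∨ 4 ≤ (P c0).card := by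
    rcases le_or_gt (P c0).card 3 with h | h
    · exact Or.inl (hkey h)
    · exact Or.inr h
  clear hkey
  set m := (P c0).card with hm
  clear_value m
  interval_cases m
  all_goals try norm_num [Nat.choose] at hkey'
  all_goals try rw [← Finset.one_le_card] at hkey'
  all_goals omega

theorem stmt12 (A : Fin 7 → Fin 6 → Bool) (hA : IsSHF 7 6 3 A)
    (hstd : StandardForm A) :
    6 ≤ (Finset.univ.filter fun r : Fin 7 => rowType A r = 1).card :=
  stmt12_aux A hA hstd
end

section
/- Let A be an SHF(7; 5, 2, {1,3}) in standard form. Then at least five of the seven rows of A are of type 1; that is, the rows of A can be permuted so that each of the first five rows contains exactly one entry equal to 1. -/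
/-- The set of columns where row `r` is `true`. -/
def trueset {N n : ℕ} (A : Fin N → Fin n → Bool) (r : Fin N) : Finset (Fin n) :=
  Finset.univ.filter fun c => A r c = true


/-- Column `c` is covered by a row of type 1. -/
def Covered (A : Fin 7 → Fin 5 → Bool) (c : Fin 5) : Prop :=
  ∃ r, rowType A r = 1 ∧ A r c = true


lemma trueset_of_type1 {A : Fin 7 → Fin 5 → Bool} {r : Fin 7} {c : Fin 5}
    (h1 : rowType A r = 1) (hc : A r c = true) : trueset A r = {c} := by
  have hcard : (trueset A r).card = 1 := h1
  obtain ⟨a, ha⟩ := Finset.card_eq_one.mp hcard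
  have hcm : c ∈ trueset A r := by simp [trueset, hc]
  rw [ha] at hcm ⊢
  simp at hcm
  rw [hcm]

lemma key_s14 {A : Fin 7 → Fin 5 → Bool} (hA : IsSHF 7 5 3 A)
    (hle2 : ∀ r, rowType A r ≤ 2)
    {c : Fin 5} (hc : ¬ Covered A c) {b : Fin 5} (hb : b ≠ c) :
    ∃ r, trueset A r = {c, b} := by
  have hcb : c ≠ b := hb.symm
  have hcard : (Finset.univ \ {c, b} : Finset (Fin 5)).card = 3 := by
    rw [Finset.card_sdiff_of_subset (Finset.subset_univ _), Finset.card_pair hcb]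
    simp
  obtain ⟨r, hr⟩ := hA c (Finset.univ \ {c, b}) hcard (by simp)
  by_cases hac : A r c = true
  · have hsub : trueset A r ⊆ {c, b} := by
      intro x hx
      by_contra hxm
      have hxC : x ∈ Finset.univ \ ({c, b} : Finset (Fin 5)) := by
        simp only [Finset.mem_sdiff, Finset.mem_univ, true_and]; exact hxm
      have h2 := hr x hxC
      simp only [trueset, Finset.mem_filter] at hx
      rw [hac, hx.2] at h2; exact h2 rfl
    by_cases hab : A r b = true
    · refine ⟨r, subset_antisymm hsub ?_⟩
      intro x hx
      simp only [Finset.mem_insert, Finset.mem_singleton] at hx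
      rcases hx with h | h <;> subst h <;> simp [trueset, hac, hab]
    · exfalso; apply hc
      have htr : trueset A r = {c} := by
        apply subset_antisymm
        · intro x hx
          have h2 := hsub hx
          simp only [Finset.mem_insert, Finset.mem_singleton] at h2 ⊢
          rcases h2 with h | h
          · exact h
          · subst h
            simp only [trueset, Finset.mem_filter] at hx
            exact absurd hx.2 hab
        · intro x hx
          simp only [Finset.mem_singleton] at hx
          subst hx; simp [trueset, hac]
      refine ⟨r, ?_, hac⟩
      show (trueset A r).card = 1
      rw [htr]; rfl
  · exfalso
    have hsub : Finset.univ \ ({c, b} : Finset (Fin 5)) ⊆ trueset A r := by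
      intro x hx
      have h2 := hr x hx
      simp only [trueset, Finset.mem_filter, Finset.mem_univ, true_and]
      cases hAx : A r x with
      | false => rw [hAx] at h2; simp at hac; rw [hac] at h2; exact absurd rfl h2
      | true => rfl
    have := Finset.card_le_card hsub
    rw [hcard] at this
    have h3 : (trueset A r).card ≤ 2 := hle2 r
    omega

/-- The family of pair-sets through `c`. -/
def Efam (c : Fin 5) : Finset (Finset (Fin 5)) :=
  (Finset.univ.erase c).image (fun b => ({c, b} : Finset (Fin 5)))

lemma card_Efam (c : Fin 5) : (Efam c).card = 4 := by
  rw [Efam, Finset.card_image_of_injOn ?_]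
  · rw [Finset.card_erase_of_mem (Finset.mem_univ c), Finset.card_univ, Fintype.card_fin]
  · intro b₁ h₁ b₂ h₂ h
    simp only [Finset.coe_erase, Set.mem_diff, Set.mem_singleton_iff] at h₁ h₂
    have h' : ({c, b₁} : Finset (Fin 5)) = {c, b₂} := h
    have : b₁ ∈ ({c, b₂} : Finset (Fin 5)) := by rw [← h']; simp
    simp only [Finset.mem_insert, Finset.mem_singleton] at this
    rcases this with h' | h'
    · exact absurd h' h₁.2
    · exact h'

lemma mem_Efam {c : Fin 5} {s : Finset (Fin 5)} (hs : s ∈ Efam c) :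
    c ∈ s ∧ ∃ b ≠ c, s = {c, b} := by
  simp only [Efam, Finset.mem_image, Finset.mem_erase, Finset.mem_univ, and_true] at hs
  obtain ⟨b, hb, rfl⟩ := hs
  exact ⟨by simp, b, hb, rfl⟩

lemma Efam_subset {A : Fin 7 → Fin 5 → Bool} (hA : IsSHF 7 5 3 A)
    (hle2 : ∀ r, rowType A r ≤ 2) {c : Fin 5} (hc : ¬ Covered A c) :
    Efam c ⊆ Finset.univ.image (trueset A) := by
  intro s hs
  obtain ⟨_, b, hb, rfl⟩ := mem_Efam hs
  obtain ⟨r, hr⟩ := key_s14 hA hle2 hc hb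
  exact Finset.mem_image.mpr ⟨r, Finset.mem_univ r, hr⟩

theorem stmt14 (A : Fin 7 → Fin 5 → Bool) (hA : IsSHF 7 5 3 A)
    (hstd : StandardForm A) :
    5 ≤ (Finset.univ.filter fun r : Fin 7 => rowType A r = 1).card := by
  have hle2 : ∀ r, rowType A r ≤ 2 := fun r => by have := hstd r; omega
  have hI : (Finset.univ.image (trueset A)).card ≤ 7 := by
    calc (Finset.univ.image (trueset A)).card ≤ (Finset.univ : Finset (Fin 7)).card :=
      Finset.card_image_le
    _ = 7 := by simp
  by_cases hcov : ∀ c : Fin 5, Covered A c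
  · choose f hf1 hf2 using hcov
    have hinj : Function.Injective f := by
      intro c₁ c₂ h
      have h1 := trueset_of_type1 (hf1 c₁) (hf2 c₁)
      have h2 := trueset_of_type1 (hf1 c₂) (hf2 c₂)
      rw [h] at h1
      rw [h1] at h2
      exact Finset.singleton_injective h2
    calc (5 : ℕ) = (Finset.univ.image f).card := by
          rw [Finset.card_image_of_injective _ hinj]; simp
      _ ≤ _ := by
          apply Finset.card_le_card
          intro r hr
          simp only [Finset.mem_image, Finset.mem_univ, true_and] at hr
          obtain ⟨c, rfl⟩ := hr
          simp only [Finset.mem_filter, Finset.mem_univ, true_and]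
          exact hf1 c
  · push_neg at hcov
    obtain ⟨c, hc⟩ := hcov
    exfalso
    by_cases hd : ∃ d, d ≠ c ∧ ¬ Covered A d
    · -- two uncovered columns
      obtain ⟨d, hdc, hd⟩ := hd
      have hEc := Efam_subset hA hle2 hc
      have hEd := Efam_subset hA hle2 hd
      have hinter : (Efam c ∩ Efam d).card ≤ 1 := by
        apply Finset.card_le_card (t := {({c, d} : Finset (Fin 5))}) ?_ |>.trans
        · simp
        · intro s hs
          obtain ⟨hs1, hs2⟩ := Finset.mem_inter.mp hs
          obtain ⟨hcs, b, hb, rfl⟩ := mem_Efam hs1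
          obtain ⟨hds, -⟩ := mem_Efam hs2
          simp only [Finset.mem_insert, Finset.mem_singleton] at hds
          rcases hds with h | h
          · exact absurd h hdc
          · simp [← h]
      have hunion : 7 ≤ (Efam c ∪ Efam d).card := by
        have := Finset.card_union_add_card_inter (Efam c) (Efam d)
        rw [card_Efam, card_Efam] at this
        omega
      -- find a fifth set avoiding c and d
      have hcd2 : ({c, d} : Finset (Fin 5)).card ≤ 2 := Finset.card_insert_le _ _ |>.trans (by simp)
      have hrest : 2 ≤ (Finset.univ \ ({c, d} : Finset (Fin 5))).card := by
        rw [Finset.card_sdiff_of_subset (Finset.subset_univ _)]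
        have : (Finset.univ : Finset (Fin 5)).card = 5 := by simp
        omega
      obtain ⟨e, he, f, hf, hef⟩ := Finset.one_lt_card.mp (by omega : 1 < (Finset.univ \ ({c, d} : Finset (Fin 5))).card)
      simp only [Finset.mem_sdiff, Finset.mem_univ, true_and, Finset.mem_insert,
        Finset.mem_singleton, not_or] at he hf
      -- get an extra set in the image avoiding c and d
      have hextra : ∃ s ∈ Finset.univ.image (trueset A), c ∉ s ∧ d ∉ s := by
        by_cases hce : Covered A e
        · obtain ⟨r, hr1, hr2⟩ := hce
          refine ⟨{e}, Finset.mem_image.mpr ⟨r, Finset.mem_univ r, trueset_of_type1 hr1 hr2⟩, ?_, ?_⟩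
          · simp only [Finset.mem_singleton]; exact fun h => he.1 h.symm
          · simp only [Finset.mem_singleton]; exact fun h => he.2 h.symm
        · obtain ⟨r, hr⟩ := key_s14 hA hle2 hce (Ne.symm hef)
          refine ⟨{e, f}, Finset.mem_image.mpr ⟨r, Finset.mem_univ r, hr⟩, ?_, ?_⟩
          · simp only [Finset.mem_insert, Finset.mem_singleton, not_or]
            exact ⟨fun h => he.1 h.symm, fun h => hf.1 h.symm⟩
          · simp only [Finset.mem_insert, Finset.mem_singleton, not_or]
            exact ⟨fun h => he.2 h.symm, fun h => hf.2 h.symm⟩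
      obtain ⟨s, hsI, hsc, hsd⟩ := hextra
      have hsnot : s ∉ Efam c ∪ Efam d := by
        intro h
        rcases Finset.mem_union.mp h with h | h
        · exact hsc (mem_Efam h).1
        · exact hsd (mem_Efam h).1
      have : 8 ≤ (Finset.univ.image (trueset A)).card := by
        calc 8 = 1 + 7 := rfl
        _ ≤ (insert s (Efam c ∪ Efam d)).card := by
            rw [Finset.card_insert_of_notMem hsnot]; omega
        _ ≤ _ := Finset.card_le_card (by
            intro t ht
            rcases Finset.mem_insert.mp ht with rfl | ht
            · exact hsI
            · rcases Finset.mem_union.mp ht with h | h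
              · exact hEc h
              · exact hEd h)
      omega
    · -- only c uncovered
      push_neg at hd
      have hEc := Efam_subset hA hle2 hc
      set F : Finset (Finset (Fin 5)) :=
        (Finset.univ.erase c).image (fun d => ({d} : Finset (Fin 5))) with hF
      have hFcard : F.card = 4 := by
        rw [hF, Finset.card_image_of_injective _ Finset.singleton_injective]
        simp
      have hFsub : F ⊆ Finset.univ.image (trueset A) := by
        intro s hs
        simp only [hF, Finset.mem_image, Finset.mem_erase, Finset.mem_univ, and_true] at hs
        obtain ⟨d, hdc, rfl⟩ := hs
        obtain ⟨r, hr1, hr2⟩ := hd d hdc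
        exact Finset.mem_image.mpr ⟨r, Finset.mem_univ r, trueset_of_type1 hr1 hr2⟩
      have hdisj : Disjoint (Efam c) F := by
        rw [Finset.disjoint_left]
        intro s hs hsF
        obtain ⟨-, b, hb, rfl⟩ := mem_Efam hs
        simp only [hF, Finset.mem_image, Finset.mem_erase, Finset.mem_univ, and_true] at hsF
        obtain ⟨d, hdc, hds⟩ := hsF
        have : ({c, b} : Finset (Fin 5)).card = 2 := Finset.card_pair (Ne.symm hb)
        rw [← hds] at this
        simp at this
      have h8 : (Efam c ∪ F).card = 8 := by
        rw [Finset.card_union_of_disjoint hdisj, card_Efam, hFcard]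
      have hle := Finset.card_le_card (Finset.union_subset hEc hFsub)
      omega
end
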